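/- arXiv:2512.24096 — 4 statements merged into one kernel-verified Lean document; each statement's English description precedes it below -/
import Mathlib

section
/- Fix an observed data distribution P of (Y, D, Z) on 𝒴 × {0,1} × 𝒵 with P(Z=z) > 0 for all z ∈ 𝒵. A collection of functions {π_z : 𝒴² × {0,1}² → [0,1]}_{z∈𝒵} arises as the collection of marginal pmfs of some primitive distribution P* that satisfies IV validity and generates P if and only if the following three conditions hold: (1) data matching: for every y ∈ 𝒴 and z ∈ 𝒵, P(Y=y, D=1 | Z=z) = Σ_{y0∈𝒴, d1∈{0,1}} π_z(y0, y, 1, d1) and P(Y=y, D=0 | Z=z) = Σ_{y1∈𝒴, d1∈{0,1}} π_z(y, y1, 0, d1); (2) common potential-outcome marginal: for all y0, y1 ∈ 𝒴 and all z ∈ 𝒵, Σ_{(d0,d1)∈{0,1}²} π_z(y0, y1, d0, d1) = Σ_{(d0,d1)∈{0,1}²} π_1(y0, y1, d0, d1); (3) validity: each π_z is nonnegative and Σ_{(y0,y1,d0,d1)∈𝒴²×{0,1}²} π_z(y0, y1, d0, d1) = 1. -/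
/-!
Necessity: by IV validity, `P*(Y = y, D = d, Z = z)` factors as `P*(Z = z)` times the
probability of an event in `(Y(0), Y(1), D(z, 0))` alone, and that probability is a partial sum
of `π_z`.

Sufficiency: let `Z` be independent of the rest with its observed law, draw `(Y(0), Y(1))` from
the common marginal `q = ∑_{d0,d1} π_z`, and, given `(Y(0), Y(1)) = (a, b)`, draw the
responses `D(w, ·)` of the judges independently from `π_w(a, b, ·, ·) / q(a, b)`. The marginal
of judge `z` is then `π_z`, so by the necessity computation the generated data law is the one
dictated by data matching, namely `P`.
-/

open Finset
open scoped Classical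

namespace IVPol

/-- Sample space of model primitives `(Y(0), Y(1), D(·,·), Z)`:
a point records the two potential outcomes (elements of the finite outcome set `Y ⊆ ℝ`),
the potential treatments `D(z, a) ∈ {0,1}` for every judge `z` and policy `a`,
and the instrument value `Z`. -/
abbrev Prim (Y : Finset ℝ) (K : ℕ) := Y × Y × (Fin K → Bool → Bool) × Fin K

/-- Sample space of the observed data `(Y, D, Z)`. -/
abbrev Obs (Y : Finset ℝ) (K : ℕ) := Y × Bool × Fin K

/-- A probability distribution on a finite type, given by its pmf. -/
structure Dist (α : Type*) [Fintype α] where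
  p : α → ℝ
  nonneg : ∀ a, 0 ≤ p a
  sum_one : ∑ a, p a = 1

/-- Probability of an event. -/
noncomputable def Dist.pr {α : Type*} [Fintype α] (P : Dist α) (A : Set α) : ℝ :=
  ∑ a, if a ∈ A then P.p a else 0

/-- Expectation of a real-valued random variable. -/
noncomputable def Dist.exp {α : Type*} [Fintype α] (P : Dist α) (f : α → ℝ) : ℝ :=
  ∑ a, P.p a * f a

variable {Y : Finset ℝ} {K : ℕ}

/-- Potential treatment `D(z, a)`. -/
def pd (ω : Prim Y K) (z : Fin K) (a : Bool) : Bool := ω.2.2.1 z a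

/-- The instrument `Z`. -/
def pz (ω : Prim Y K) : Fin K := ω.2.2.2

/-- Observed treatment `D = D(Z, 0)`. -/
def obsD (ω : Prim Y K) : Bool := pd ω (pz ω) false

/-- Observed outcome `Y = Y(D(Z, 0))`. -/
def obsY (ω : Prim Y K) : Y := if obsD ω then ω.2.1 else ω.1

/-- Counterfactual outcome `Y(D(Z, 1))`. -/
noncomputable def cfY (ω : Prim Y K) : ℝ :=
  if pd ω (pz ω) true then (ω.2.1 : ℝ) else (ω.1 : ℝ)

/-- IV validity: `(Y(0), Y(1), D(·,·))` is independent of `Z`. -/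
def IVvalid (Ps : Dist (Prim Y K)) : Prop :=
  ∀ (a b : Y) (g : Fin K → Bool → Bool) (z : Fin K),
    Ps.pr {ω | ω.1 = a ∧ ω.2.1 = b ∧ ω.2.2.1 = g ∧ ω.2.2.2 = z}
      = Ps.pr {ω | ω.1 = a ∧ ω.2.1 = b ∧ ω.2.2.1 = g} * Ps.pr {ω | ω.2.2.2 = z}

/-- `Ps` generates the observed data distribution `P`:
the law of `(Y(D(Z,0)), D(Z,0), Z)` under `Ps` is `P`. -/
def generates (Ps : Dist (Prim Y K)) (P : Dist (Obs Y K)) : Prop :=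
  ∀ (y : Y) (d : Bool) (z : Fin K),
    P.p (y, d, z) = Ps.pr {ω | obsY ω = y ∧ obsD ω = d ∧ pz ω = z}

/-- Marginal pmf of judge `z`:
`π_z(y0, y1, d0, d1) = P*(Y(0)=y0, Y(1)=y1, D(z,0)=d0, D(z,1)=d1)`. -/
noncomputable def marginal (Ps : Dist (Prim Y K)) (z : Fin K) (y0 y1 : Y) (d0 d1 : Bool) : ℝ :=
  Ps.pr {ω | ω.1 = y0 ∧ ω.2.1 = y1 ∧ pd ω z false = d0 ∧ pd ω z true = d1}

/-- Probability of `Z = z` under the observed distribution. -/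
noncomputable def prZ (P : Dist (Obs Y K)) (z : Fin K) : ℝ := P.pr {o | o.2.2 = z}

/-- Conditional probability `P(Y = y, D = d | Z = z)` of the observed data. -/
noncomputable def obsCond (P : Dist (Obs Y K)) (y : Y) (d : Bool) (z : Fin K) : ℝ :=
  P.p (y, d, z) / prZ P z


namespace Dist

variable {α β γ : Type*} [Fintype α] [Fintype β]

lemma pr_nonneg (P : Dist α) (A : Set α) : 0 ≤ P.pr A :=
  sum_nonneg fun a _ => by split_ifs <;> simp [P.nonneg a]

lemma pr_univ (P : Dist α) : P.pr Set.univ = 1 := by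
  simp [Dist.pr, P.sum_one]

lemma pr_singleton (P : Dist α) (a : α) : P.pr {a} = P.p a := by
  simp [Dist.pr]

lemma sum_pr_fiberwise (P : Dist α) (f : α → β) {S : β → Set α} {T : Set α}
    (h : ∀ a b, a ∈ S b ↔ a ∈ T ∧ f a = b) : ∑ b, P.pr (S b) = P.pr T := by
  unfold Dist.pr
  rw [sum_comm]
  refine sum_congr rfl fun a _ => ?_
  simp [h, ite_and]

lemma sum_sum_pr_fiberwise [Fintype γ] (P : Dist α) (f : α → β) (g : α → γ)
    {S : β → γ → Set α} {T : Set α}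
    (h : ∀ a b c, a ∈ S b c ↔ a ∈ T ∧ f a = b ∧ g a = c) :
    ∑ b, ∑ c, P.pr (S b c) = P.pr T :=
  calc ∑ b, ∑ c, P.pr (S b c) = ∑ b, P.pr {a | a ∈ T ∧ f a = b} :=
        sum_congr rfl fun b _ => P.sum_pr_fiberwise g fun a c => by
          rw [h, Set.mem_ofPred_eq, and_assoc]
    _ = P.pr T := P.sum_pr_fiberwise f fun _ _ => Iff.rfl

lemma pr_preimage_and (P : Dist α) (f : α → β) (S : Set β) (q : α → Prop) :
    P.pr {a | f a ∈ S ∧ q a} = ∑ b, if b ∈ S then P.pr {a | f a = b ∧ q a} else 0 := by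
  rw [← P.sum_pr_fiberwise f (S := fun b => {a | f a ∈ S ∧ q a ∧ f a = b})
    (T := {a | f a ∈ S ∧ q a})
    fun _ _ => and_assoc.symm]
  refine sum_congr rfl fun b _ => ?_
  split_ifs with hb
  · congr 1; ext a; constructor
    · rintro ⟨-, hq, rfl⟩; exact ⟨rfl, hq⟩
    · rintro ⟨rfl, hq⟩; exact ⟨hb, hq, rfl⟩
  · simp only [Dist.pr, Set.mem_ofPred_eq]
    exact sum_eq_zero fun a _ => if_neg fun ⟨ha, _, hab⟩ => hb (hab ▸ ha)

lemma pr_eq_pr_preimage {Q : Dist β} {P : Dist α} {φ : α → β}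
    (h : ∀ b, Q.p b = P.pr {a | φ a = b}) (S : Set β) : Q.pr S = P.pr (φ ⁻¹' S) := by
  have := P.pr_preimage_and φ S fun _ => True
  simp only [and_true] at this
  rw [show φ ⁻¹' S = {a | φ a ∈ S} from rfl, this]
  simp only [Dist.pr, h]

lemma pr_and_eq_mul_of_indep (P : Dist α) (f : α → β) (g : α → γ)
    (hind : ∀ b c, P.pr {a | f a = b ∧ g a = c} = P.pr {a | f a = b} * P.pr {a | g a = c})
    (S : Set β) (c : γ) :
    P.pr {a | f a ∈ S ∧ g a = c} = P.pr {a | f a ∈ S} * P.pr {a | g a = c} := by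
  have hS := P.pr_preimage_and f S fun _ => True
  simp only [and_true] at hS
  rw [P.pr_preimage_and, hS, sum_mul]
  refine sum_congr rfl fun b _ => ?_
  split_ifs
  · exact hind b c
  · rw [zero_mul]

noncomputable def map (P : Dist α) (f : α → β) : Dist β where
  p b := P.pr {a | f a = b}
  nonneg b := P.pr_nonneg _
  sum_one := by rw [P.sum_pr_fiberwise f (T := Set.univ) fun _ _ => by simp, pr_univ]

def prod (P : Dist α) (Q : Dist β) : Dist (α × β) where
  p x := P.p x.1 * Q.p x.2
  nonneg x := mul_nonneg (P.nonneg _) (Q.nonneg _)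
  sum_one := by rw [Fintype.sum_prod_type, ← sum_mul_sum, P.sum_one, Q.sum_one, one_mul]

lemma pr_prod (P : Dist α) (Q : Dist β) (S : Set α) (T : Set β) :
    (P.prod Q).pr (S ×ˢ T) = P.pr S * Q.pr T := by
  simp only [Dist.pr, Fintype.sum_prod_type, sum_mul_sum, Set.mem_prod, ite_and]
  refine sum_congr rfl fun a _ => sum_congr rfl fun b _ => ?_
  split_ifs <;> simp [Dist.prod]

def comapEquiv (P : Dist β) (e : α ≃ β) : Dist α where
  p a := P.p (e a)
  nonneg a := P.nonneg _
  sum_one := by rw [e.sum_comp, P.sum_one]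

lemma pr_comapEquiv_preimage (P : Dist β) (e : α ≃ β) (S : Set β) :
    (P.comapEquiv e).pr (e ⁻¹' S) = P.pr S :=
  e.sum_comp fun b => if b ∈ S then P.p b else 0

lemma pr_comapEquiv_prod [Fintype γ] (P : Dist β) (Q : Dist γ) (e : α ≃ β × γ)
    (S : Set β) (T : Set γ) :
    ((P.prod Q).comapEquiv e).pr {a | (e a).1 ∈ S ∧ (e a).2 ∈ T} = P.pr S * Q.pr T :=
  (pr_comapEquiv_preimage _ e (S ×ˢ T)).trans (pr_prod P Q S T)

end Dist

lemma sum_bool_arrow {M : Type*} [AddCommMonoid M] (F : Bool → Bool → M) :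
    ∑ t : Bool → Bool, F (t false) (t true) = ∑ d0, ∑ d1, F d0 d1 := by
  rw [← Fintype.sum_prod_type']
  exact Fintype.sum_equiv (Equiv.boolArrowEquivProd Bool) _ _ fun _ => rfl

/-- Conditionally on a mass `c`, the coordinates `g i` are drawn independently from the
subprobabilities `f i / c`; this computes the law of a single coordinate. -/
lemma sum_ite_mul_prod_div {ι β : Type*} [Fintype ι] [DecidableEq ι] [Fintype β]
    {f : ι → β → ℝ} {c : ℝ} (hf0 : ∀ i t, 0 ≤ f i t) (hf : ∀ i, ∑ t, f i t = c)
    (z : ι) (p : β → Prop) [DecidablePred p] :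
    ∑ g : ι → β, (if p (g z) then c * ∏ i, f i (g i) / c else 0)
      = ∑ t, if p t then f z t else 0 := by
  by_cases hc : c = 0
  · have hfz : ∀ t, f z t = 0 := fun t =>
      (sum_eq_zero_iff_of_nonneg fun t _ => hf0 z t).mp (hc ▸ hf z) t (mem_univ t)
    simp [hc, hfz]
  set F : ι → β → ℝ := fun i t => if i = z ∧ ¬p t then 0 else f i t / c
  have hF : ∀ g : ι → β, (if p (g z) then c * ∏ i, f i (g i) / c else 0)
      = c * ∏ i, F i (g i) := by
    intro g
    split_ifs with hg
    · congr 1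
      exact prod_congr rfl fun i _ => (if_neg fun h => h.2 (h.1 ▸ hg)).symm
    · rw [prod_eq_zero (mem_univ z) (show F z (g z) = 0 from if_pos ⟨rfl, hg⟩), mul_zero]
  have hFsum : ∀ i, ∑ t, F i t
      = if i = z then (∑ t, if p t then f z t else 0) / c else 1 := by
    intro i
    split_ifs with hi
    · subst hi; rw [sum_div]; exact sum_congr rfl fun t _ => by by_cases p t <;> simp [F, *]
    · simp [F, hi, ← sum_div, hf, hc]
  rw [sum_congr rfl fun g _ => hF g, ← mul_sum, ← Fintype.prod_sum,
    prod_congr rfl fun i _ => hFsum i, Fintype.prod_ite_eq', mul_div_cancel₀ _ hc]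

def primEquiv : Prim Y K ≃ (Y × Y × (Fin K → Bool → Bool)) × Fin K where
  toFun ω := ((ω.1, ω.2.1, ω.2.2.1), ω.2.2.2)
  invFun x := (x.1.1, x.1.2.1, x.1.2.2, x.2)
  left_inv _ := rfl
  right_inv _ := rfl

@[simp]
lemma primEquiv_apply (ω : Prim Y K) : primEquiv ω = ((ω.1, ω.2.1, ω.2.2.1), ω.2.2.2) := rfl

lemma IVvalid.pr_and_pz_eq_mul {Ps : Dist (Prim Y K)} (hIV : IVvalid Ps)
    (S : Set (Y × Y × (Fin K → Bool → Bool))) (z : Fin K) :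
    Ps.pr {ω | (primEquiv ω).1 ∈ S ∧ pz ω = z}
      = Ps.pr {ω | (primEquiv ω).1 ∈ S} * Ps.pr {ω | pz ω = z} := by
  refine Ps.pr_and_eq_mul_of_indep _ pz (fun x z => ?_) S z
  convert hIV x.1 x.2.1 x.2.2 z using 3 <;>
    simp [pz, Prod.ext_iff, and_assoc]

lemma pr_obs_true_eq {Ps : Dist (Prim Y K)} (hIV : IVvalid Ps) (y : Y) (z : Fin K) :
    Ps.pr {ω | obsY ω = y ∧ obsD ω = true ∧ pz ω = z}
      = (∑ y0 : Y, ∑ d1 : Bool, marginal Ps z y0 y true d1) * Ps.pr {ω | pz ω = z} := by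
  have hobs : {ω | obsY ω = y ∧ obsD ω = true ∧ pz ω = z}
      = {ω | (primEquiv ω).1 ∈ {x | x.2.1 = y ∧ x.2.2 z false = true} ∧ pz ω = z} := by
    ext ω
    simp only [Set.mem_ofPred_eq, obsY, obsD, pd, primEquiv_apply]
    constructor
    · rintro ⟨h, hD, rfl⟩; simp_all
    · rintro ⟨⟨rfl, hD⟩, rfl⟩; simp_all
  rw [hobs, hIV.pr_and_pz_eq_mul]
  congr 1
  exact (Ps.sum_sum_pr_fiberwise (·.1) (pd · z true) fun ω _ _ => by
    simp only [primEquiv_apply, pd, Set.mem_ofPred_eq]; tauto).symm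

lemma pr_obs_false_eq {Ps : Dist (Prim Y K)} (hIV : IVvalid Ps) (y : Y) (z : Fin K) :
    Ps.pr {ω | obsY ω = y ∧ obsD ω = false ∧ pz ω = z}
      = (∑ y1 : Y, ∑ d1 : Bool, marginal Ps z y y1 false d1) * Ps.pr {ω | pz ω = z} := by
  have hobs : {ω | obsY ω = y ∧ obsD ω = false ∧ pz ω = z}
      = {ω | (primEquiv ω).1 ∈ {x | x.1 = y ∧ x.2.2 z false = false} ∧ pz ω = z} := by
    ext ω
    simp only [Set.mem_ofPred_eq, obsY, obsD, pd, primEquiv_apply]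
    constructor
    · rintro ⟨h, hD, rfl⟩; simp_all
    · rintro ⟨⟨rfl, hD⟩, rfl⟩; simp_all
  rw [hobs, hIV.pr_and_pz_eq_mul]
  congr 1
  exact (Ps.sum_sum_pr_fiberwise (·.2.1) (pd · z true) fun ω _ _ => by
    simp only [primEquiv_apply, pd, Set.mem_ofPred_eq]; tauto).symm

lemma sum_marginal_treatments (Ps : Dist (Prim Y K)) (z : Fin K) (y0 y1 : Y) :
    ∑ d0 : Bool, ∑ d1 : Bool, marginal Ps z y0 y1 d0 d1
      = Ps.pr {ω | ω.1 = y0 ∧ ω.2.1 = y1} :=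
  Ps.sum_sum_pr_fiberwise (pd · z false) (pd · z true) fun ω _ _ => by
    simp only [Set.mem_ofPred_eq, and_assoc]

lemma sum_marginal_eq_one (Ps : Dist (Prim Y K)) (z : Fin K) :
    ∑ y0 : Y, ∑ y1 : Y, ∑ d0 : Bool, ∑ d1 : Bool, marginal Ps z y0 y1 d0 d1 = 1 := by
  simp only [sum_marginal_treatments]
  rw [Ps.sum_sum_pr_fiberwise (·.1) (·.2.1) (T := Set.univ) fun _ _ _ => by simp, Dist.pr_univ]

lemma prZ_eq_pr_pz {Ps : Dist (Prim Y K)} {P : Dist (Obs Y K)} (hgen : generates Ps P)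
    (z : Fin K) : prZ P z = Ps.pr {ω | pz ω = z} :=
  Dist.pr_eq_pr_preimage (φ := fun ω => (obsY ω, obsD ω, pz ω))
    (fun o => by rw [hgen]; simp [Prod.ext_iff]) _

section Construction

lemma ivValid_comapEquiv_prod (Q : Dist (Y × Y × (Fin K → Bool → Bool))) (μ : Dist (Fin K)) :
    IVvalid ((Q.prod μ).comapEquiv primEquiv) := by
  intro a b g z
  have hpr := Dist.pr_comapEquiv_prod Q μ primEquiv
  have hx := hpr {(a, b, g)} {z}
  have hxu := hpr {(a, b, g)} Set.univ
  have hzu := hpr Set.univ {z}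
  simp only [Set.mem_singleton_iff, Set.mem_univ, and_true, true_and, primEquiv_apply,
    Prod.mk.injEq, and_assoc] at hx hxu hzu
  rw [hx, hxu, hzu, Dist.pr_univ, Dist.pr_univ, mul_one, one_mul]

lemma marginal_comapEquiv_prod (Q : Dist (Y × Y × (Fin K → Bool → Bool)))
    (μ : Dist (Fin K)) (z : Fin K) (y0 y1 : Y) (d0 d1 : Bool) :
    marginal ((Q.prod μ).comapEquiv primEquiv) z y0 y1 d0 d1
      = Q.pr {x | x.1 = y0 ∧ x.2.1 = y1 ∧ x.2.2 z false = d0 ∧ x.2.2 z true = d1} := by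
  have := Dist.pr_comapEquiv_prod Q μ primEquiv
    {x | x.1 = y0 ∧ x.2.1 = y1 ∧ x.2.2 z false = d0 ∧ x.2.2 z true = d1} Set.univ
  simpa [marginal, pd, Dist.pr_univ] using this

lemma pr_pz_comapEquiv_prod (Q : Dist (Y × Y × (Fin K → Bool → Bool))) (μ : Dist (Fin K))
    (z : Fin K) : ((Q.prod μ).comapEquiv primEquiv).pr {ω | pz ω = z} = μ.p z := by
  have := Dist.pr_comapEquiv_prod Q μ primEquiv Set.univ {z}
  simpa [pz, Dist.pr_univ, Dist.pr_singleton] using this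

variable [NeZero K] (π : Fin K → Y → Y → Bool → Bool → ℝ)

noncomputable def outcomeMass (a b : Y) : ℝ := ∑ d0 : Bool, ∑ d1 : Bool, π 0 a b d0 d1

/-- Given `(Y(0), Y(1)) = (a, b)`, which has mass `outcomeMass π a b`, the treatment
responses `D(w, ·)` of the judges are independent with laws `π w a b / outcomeMass π a b`. -/
noncomputable def jointPmf (x : Y × Y × (Fin K → Bool → Bool)) : ℝ :=
  outcomeMass π x.1 x.2.1 *
    ∏ w, π w x.1 x.2.1 (x.2.2 w false) (x.2.2 w true) / outcomeMass π x.1 x.2.1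

variable {π}
variable (hnn : ∀ (z : Fin K) (y0 y1 : Y) (d0 d1 : Bool), 0 ≤ π z y0 y1 d0 d1)
  (hcom : ∀ (y0 y1 : Y) (z : Fin K),
    ∑ d0 : Bool, ∑ d1 : Bool, π z y0 y1 d0 d1 = ∑ d0 : Bool, ∑ d1 : Bool, π 0 y0 y1 d0 d1)
include hnn hcom

lemma sum_ite_jointPmf (a b : Y) (z : Fin K) (p : (Bool → Bool) → Prop) [DecidablePred p] :
    ∑ g, (if p (g z) then jointPmf π (a, b, g) else 0)
      = ∑ t, if p t then π z a b (t false) (t true) else 0 :=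
  sum_ite_mul_prod_div (fun w _ => hnn w a b _ _)
    (fun w => (sum_bool_arrow (π w a b)).trans (hcom a b w)) z p

lemma sum_jointPmf (a b : Y) : ∑ g, jointPmf π (a, b, g) = outcomeMass π a b := by
  have := sum_ite_jointPmf hnn hcom a b 0 fun _ => True
  simp only [if_true] at this
  rw [this, sum_bool_arrow (π 0 a b), outcomeMass]

noncomputable def jointDist (hsum : ∑ a : Y, ∑ b : Y, outcomeMass π a b = 1) :
    Dist (Y × Y × (Fin K → Bool → Bool)) where
  p := jointPmf π
  nonneg x :=
    have hq : 0 ≤ outcomeMass π x.1 x.2.1 := sum_nonneg fun _ _ => sum_nonneg fun _ _ => hnn ..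
    mul_nonneg hq (prod_nonneg fun w _ => div_nonneg (hnn ..) hq)
  sum_one := by
    simp only [Fintype.sum_prod_type, sum_jointPmf hnn hcom, hsum]

lemma pr_jointDist (hsum : ∑ a : Y, ∑ b : Y, outcomeMass π a b = 1) (z : Fin K) (y0 y1 : Y)
    (d0 d1 : Bool) :
    (jointDist hnn hcom hsum).pr
      {x | x.1 = y0 ∧ x.2.1 = y1 ∧ x.2.2 z false = d0 ∧ x.2.2 z true = d1}
      = π z y0 y1 d0 d1 :=
  calc _ = ∑ g, if g z false = d0 ∧ g z true = d1 then jointPmf π (y0, y1, g) else 0 := by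
        simp only [Dist.pr, jointDist, Fintype.sum_prod_type, Set.mem_ofPred_eq]
        rw [Fintype.sum_eq_single y0, Fintype.sum_eq_single y1]
        · exact sum_congr rfl fun g _ => by congr 1; simp
        · exact fun b hb => sum_eq_zero fun g _ => if_neg fun h => hb h.2.1
        · exact fun a ha => sum_eq_zero fun b _ => sum_eq_zero fun g _ => if_neg fun h => ha h.1
    _ = ∑ t : Bool → Bool, if t false = d0 ∧ t true = d1 then π z y0 y1 (t false) (t true)
          else 0 := sum_ite_jointPmf hnn hcom y0 y1 z fun t => t false = d0 ∧ t true = d1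
    _ = π z y0 y1 d0 d1 := by
        rw [sum_bool_arrow fun a b => if a = d0 ∧ b = d1 then π z y0 y1 a b else 0]
        simp [ite_and]

end Construction

/-- Proposition 1: a collection `{π_z}` arises as the collection of
marginal pmfs of some IV-valid primitive distribution generating the data `P`
if and only if it matches the data, implies a common distribution of the potential
outcomes, and consists of valid pmfs. -/
theorem statement0 {Y : Finset ℝ} {K : ℕ} [NeZero K]
    (P : Dist (Obs Y K)) (hPz : ∀ z : Fin K, 0 < prZ P z)
    (π : Fin K → Y → Y → Bool → Bool → ℝ) :
    (∃ Ps : Dist (Prim Y K), IVvalid Ps ∧ generates Ps P ∧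
        ∀ (z : Fin K) (y0 y1 : Y) (d0 d1 : Bool),
          marginal Ps z y0 y1 d0 d1 = π z y0 y1 d0 d1) ↔
      ((∀ (y : Y) (z : Fin K),
          obsCond P y true z = ∑ y0 : Y, ∑ d1 : Bool, π z y0 y true d1) ∧
        (∀ (y : Y) (z : Fin K),
          obsCond P y false z = ∑ y1 : Y, ∑ d1 : Bool, π z y y1 false d1) ∧
        (∀ (y0 y1 : Y) (z : Fin K),
          ∑ d0 : Bool, ∑ d1 : Bool, π z y0 y1 d0 d1
            = ∑ d0 : Bool, ∑ d1 : Bool, π 0 y0 y1 d0 d1) ∧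
        (∀ (z : Fin K) (y0 y1 : Y) (d0 d1 : Bool), 0 ≤ π z y0 y1 d0 d1) ∧
        (∀ z : Fin K,
          ∑ y0 : Y, ∑ y1 : Y, ∑ d0 : Bool, ∑ d1 : Bool, π z y0 y1 d0 d1 = 1)) := by
  constructor
  · rintro ⟨Ps, hIV, hgen, hmarg⟩
    simp only [← hmarg]
    have hZ : ∀ z, prZ P z = Ps.pr {ω | pz ω = z} := prZ_eq_pr_pz hgen
    refine ⟨fun y z => ?_, fun y z => ?_, fun y0 y1 z => ?_, fun _ _ _ _ _ => Dist.pr_nonneg _ _,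
      sum_marginal_eq_one Ps⟩
    · rw [obsCond, hgen, pr_obs_true_eq hIV, ← hZ, mul_div_cancel_right₀ _ (hPz z).ne']
    · rw [obsCond, hgen, pr_obs_false_eq hIV, ← hZ, mul_div_cancel_right₀ _ (hPz z).ne']
    · rw [sum_marginal_treatments, sum_marginal_treatments]
  · rintro ⟨hdata1, hdata0, hcom, hnn, hsum⟩
    let Ps := ((jointDist hnn hcom (hsum 0)).prod (P.map (·.2.2))).comapEquiv primEquiv
    have hIV : IVvalid Ps := ivValid_comapEquiv_prod _ _
    have hmarg : ∀ z y0 y1 d0 d1, marginal Ps z y0 y1 d0 d1 = π z y0 y1 d0 d1 :=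
      fun z y0 y1 d0 d1 => (marginal_comapEquiv_prod _ _ z y0 y1 d0 d1).trans (pr_jointDist ..)
    have hZ : ∀ z, Ps.pr {ω | pz ω = z} = prZ P z := pr_pz_comapEquiv_prod _ _
    refine ⟨Ps, hIV, fun y d z => ?_, hmarg⟩
    rw [← div_mul_cancel₀ (P.p (y, d, z)) (hPz z).ne']
    cases d
    · rw [← obsCond, hdata0, pr_obs_false_eq hIV, hZ]; simp only [hmarg]
    · rw [← obsCond, hdata1, pr_obs_true_eq hIV, hZ]; simp only [hmarg]

end IVPol
end

section
/- Fix α ∈ [0,1] and an observed data distribution P with P(Z=z) > 0 for all z. Let 𝒫*_α be the set of primitive distributions satisfying IV validity, policy monotonicity, the α-average policy quota P*(D(Z,1)=1) = α, and the known-outcome condition P*(Y(0)=0) = 1. Let 𝒫*_{α,Mon} be the subset of 𝒫*_α whose elements additionally satisfy IV monotonicity. If the identified set Θ_I(P; 𝒫*_{α,Mon}) is nonempty, then Θ_I(P; 𝒫*_{α,Mon}) = Θ_I(P; 𝒫*_α); that is, imposing IV monotonicity has no identifying power. -/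
open MeasureTheory

namespace IVM

/-- Sample space of model primitives `(Y(0), Y(1), D(·,·), Z)`: the two potential
outcomes are real numbers, the potential treatments `D(z, a) ∈ {0,1}` are recorded
for every judge `z` and policy `a`, and `Z` is the instrument. -/
abbrev PrimM (K : ℕ) := ℝ × ℝ × (Fin K → Bool → Bool) × Fin K

/-- Sample space of the observed data `(Y, D, Z)`. -/
abbrev ObsM (K : ℕ) := ℝ × Bool × Fin K

variable {K : ℕ}

/-- Potential treatment `D(z, a)`. -/
def pd (ω : PrimM K) (z : Fin K) (a : Bool) : Bool := ω.2.2.1 z a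

/-- The instrument `Z`. -/
def pz (ω : PrimM K) : Fin K := ω.2.2.2

/-- Observed treatment `D = D(Z, 0)`. -/
def obsD (ω : PrimM K) : Bool := pd ω (pz ω) false

/-- Observed outcome `Y = Y(D(Z, 0))`. -/
noncomputable def obsY (ω : PrimM K) : ℝ := if obsD ω then ω.2.1 else ω.1

/-- Counterfactual outcome `Y(D(Z, 1))`. -/
noncomputable def cfY (ω : PrimM K) : ℝ := if pd ω (pz ω) true then ω.2.1 else ω.1

/-- The map from primitives to observed data `(Y, D, Z)`. -/
noncomputable def obsMap (ω : PrimM K) : ObsM K := (obsY ω, obsD ω, pz ω)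

/-- IV validity: `(Y(0), Y(1), D(·,·))` is independent of `Z`. -/
def IVvalid (μ : Measure (PrimM K)) : Prop :=
  ∀ (A : Set (ℝ × ℝ × (Fin K → Bool → Bool))) (z : Fin K), MeasurableSet A →
    μ {ω | (ω.1, ω.2.1, ω.2.2.1) ∈ A ∧ pz ω = z}
      = μ {ω | (ω.1, ω.2.1, ω.2.2.1) ∈ A} * μ {ω | pz ω = z}

/-- `μ` generates the observed data distribution `P`:
`P` is the law of `(Y(D(Z,0)), D(Z,0), Z)` under `μ`. -/
def generates (μ : Measure (PrimM K)) (P : Measure (ObsM K)) : Prop :=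
  P = Measure.map obsMap μ

/-- Policy monotonicity: `D(z,1) ≥ D(z,0)` almost surely, for every judge `z`. -/
def policyMono (μ : Measure (PrimM K)) : Prop :=
  ∀ z : Fin K, μ {ω | pd ω z false ≤ pd ω z true} = 1

/-- IV monotonicity: for every pair of judges, one is almost surely more lenient. -/
def ivMono (μ : Measure (PrimM K)) : Prop :=
  ∀ z z' : Fin K,
    μ {ω | pd ω z' false ≤ pd ω z false} = 1 ∨
    μ {ω | pd ω z false ≤ pd ω z' false} = 1

/-- The potential outcomes take values in the outcome set `𝒴` almost surely. -/
def suppY (𝒴 : Set ℝ) (μ : Measure (PrimM K)) : Prop :=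
  μ {ω | ω.1 ∈ 𝒴 ∧ ω.2.1 ∈ 𝒴} = 1

/-- The average counterfactual outcome `θ = E[Y(D(Z,1))]`. -/
noncomputable def theta (μ : Measure (PrimM K)) : ℝ := ∫ ω, cfY ω ∂μ

/-- The identified set for the average counterfactual outcome. -/
def ThetaI (P : Measure (ObsM K)) (fam : Set (Measure (PrimM K))) : Set ℝ :=
  {t | ∃ μ ∈ fam, generates μ P ∧ theta μ = t}

/-- The family `𝒫*_α`: probability distributions of the primitives satisfying IV
validity, policy monotonicity, outcomes supported in `𝒴`, the `α`-average policy
quota `P*(D(Z,1)=1) = α`, and the known-outcome condition `P*(Y(0)=0) = 1`. -/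
def famAlpha (K : ℕ) (𝒴 : Set ℝ) (α : ℝ) : Set (Measure (PrimM K)) :=
  {μ | IsProbabilityMeasure μ ∧ IVvalid μ ∧ policyMono μ ∧ suppY 𝒴 μ ∧
       μ {ω | pd ω (pz ω) true = true} = ENNReal.ofReal α ∧
       μ {ω | ω.1 = 0} = 1}

/-- The subfamily `𝒫*_{α,Mon}` whose elements additionally satisfy IV monotonicity. -/
def famAlphaMon (K : ℕ) (𝒴 : Set ℝ) (α : ℝ) : Set (Measure (PrimM K)) :=
  {μ ∈ famAlpha K 𝒴 α | ivMono μ}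

/-! Let `μ ∈ 𝒫*_α` generate `P`. Rebuild it from `(U, Y(1), Z)`, with `U` uniform on `[0, 1]` and
independent of `(Y(1), Z) ~ μ`, by setting `Y(0) = 0` and `D(ζ, a) = 1{U ≤ P_μ(D(ζ, a) = 1 | Y(1))}`.
For every `(ζ, a)` this reproduces the law of `(Y(1), D(ζ, a))`, and independence of `Z` carries
this over to the law of `(Y(1), D(Z, a), Z)`; since `Y(0) = 0`, that law determines the observed
data, the quota and `θ`. As one `U` is shared by all `(ζ, a)`, `D(ζ, a) ≤ D(ζ', a')` holds almost
surely as soon as the laws of `Y(1)` on `{D(ζ, a) = 1}` and `{D(ζ', a') = 1}` are ordered. For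
`a = 0` these laws are identified by `P` (because `P(Z = z) > 0`), so the ordering that IV
monotonicity gives in any model of `𝒫*_{α,Mon}` generating `P` passes to the rebuilt model, and
policy monotonicity of `μ` orders `a = 0` below `a = 1`. -/

open Set
open scoped ENNReal unitInterval

section ProdBool

variable {α : Type*} [MeasurableSpace α]

theorem measure_ext_of_prod_singleton {β : Type*} [MeasurableSpace β] [Countable β]
    [MeasurableSingletonClass β] {ν₁ ν₂ : Measure (α × β)}
    (h : ∀ B, MeasurableSet B → ∀ b, ν₁ (B ×ˢ {b}) = ν₂ (B ×ˢ {b})) : ν₁ = ν₂ := by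
  ext S hS
  have hsec : ∀ b, MeasurableSet ((fun a => (a, b)) ⁻¹' S) := fun b => measurable_prodMk_right hS
  have hS_eq : S = ⋃ b, ((fun a => (a, b)) ⁻¹' S) ×ˢ {b} := by
    ext ⟨a, b⟩; simp
  have hdisj : Pairwise (Function.onFun Disjoint
      fun b => ((fun a => (a, b)) ⁻¹' S) ×ˢ ({b} : Set β)) :=
    fun b b' hbb' => disjoint_prod.2 (Or.inr (disjoint_singleton.2 hbb'))
  have hmeas : ∀ b, MeasurableSet (((fun a => (a, b)) ⁻¹' S) ×ˢ ({b} : Set β)) :=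
    fun b => (hsec b).prod (measurableSet_singleton b)
  rw [hS_eq, measure_iUnion hdisj hmeas, measure_iUnion hdisj hmeas]
  exact tsum_congr fun b => h _ (hsec b) b

theorem measure_ext_of_map_fst_of_prod_true {ρ₁ ρ₂ : Measure (α × Bool)} [IsFiniteMeasure ρ₁]
    [IsFiniteMeasure ρ₂] (hfst : ρ₁.map Prod.fst = ρ₂.map Prod.fst)
    (htrue : ∀ B, MeasurableSet B → ρ₁ (B ×ˢ {true}) = ρ₂ (B ×ˢ {true})) : ρ₁ = ρ₂ := by
  refine measure_ext_of_prod_singleton fun B hB b => ?_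
  cases b
  · have hfalse : B ×ˢ {false} = Prod.fst ⁻¹' B \ B ×ˢ {true} := by
      ext ⟨a, b⟩; cases b <;> simp
    have hsub : B ×ˢ {true} ⊆ Prod.fst ⁻¹' B := fun p hp => hp.1
    have hmeas := hB.prod (measurableSet_singleton true)
    rw [hfalse, measure_sdiff hsub hmeas.nullMeasurableSet (measure_ne_top _ _),
      measure_sdiff hsub hmeas.nullMeasurableSet (measure_ne_top _ _), htrue B hB,
      ← Measure.map_apply measurable_fst hB, ← Measure.map_apply measurable_fst hB, hfst]
  · exact htrue B hB

noncomputable def trueLaw (ρ : Measure (α × Bool)) : Measure α :=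
  (ρ.restrict {p | p.2 = true}).map Prod.fst

theorem trueLaw_apply (ρ : Measure (α × Bool)) {B : Set α} (hB : MeasurableSet B) :
    trueLaw ρ B = ρ (B ×ˢ {true}) := by
  rw [trueLaw, Measure.map_apply measurable_fst hB,
    Measure.restrict_apply (measurable_fst hB)]
  rfl

theorem trueLaw_le_map_fst (ρ : Measure (α × Bool)) : trueLaw ρ ≤ ρ.map Prod.fst :=
  Measure.map_mono Measure.restrict_le_self measurable_fst

instance (ρ : Measure (α × Bool)) [IsFiniteMeasure ρ] : IsFiniteMeasure (trueLaw ρ) := by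
  rw [trueLaw]; infer_instance

/-- The conditional probability that the second coordinate is `true`, given the first. -/
noncomputable def threshold (ρ : Measure (α × Bool)) : α → ℝ≥0∞ :=
  (trueLaw ρ).rnDeriv (ρ.map Prod.fst)

theorem measurable_threshold (ρ : Measure (α × Bool)) : Measurable (threshold ρ) :=
  Measure.measurable_rnDeriv _ _

theorem measurableSet_ofReal_le {g : α → ℝ≥0∞} (hg : Measurable g) :
    MeasurableSet {p : I × α | ENNReal.ofReal p.1 ≤ g p.2} :=
  measurableSet_le (ENNReal.measurable_ofReal.comp (measurable_subtype_coe.comp measurable_fst))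
    (hg.comp measurable_snd)

theorem measurable_decide_ofReal_le {g : α → ℝ≥0∞} (hg : Measurable g) :
    Measurable fun p : I × α => decide (ENNReal.ofReal p.1 ≤ g p.2) := by
  refine measurable_to_bool ?_
  simp only [preimage, mem_singleton_iff, decide_eq_true_eq]
  exact measurableSet_ofReal_le hg

theorem volume_ofReal_le (c : ℝ≥0∞) : volume {u : I | ENNReal.ofReal u ≤ c} = min c 1 := by
  rcases le_or_gt 1 c with hc | hc
  · have huniv : {u : I | ENNReal.ofReal u ≤ c} = univ :=
      eq_univ_of_forall fun u => (ENNReal.ofReal_le_one.2 u.2.2).trans hc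
    rw [huniv, measure_univ, min_eq_right hc]
  · have hc_top : c ≠ ∞ := hc.ne_top
    have hIic : {u : I | ENNReal.ofReal u ≤ c} =
        Iic ⟨c.toReal, ENNReal.toReal_nonneg, ENNReal.toReal_le_of_le_ofReal zero_le_one
          (by simpa using hc.le)⟩ := by
      ext u; simp [ENNReal.ofReal_le_iff_le_toReal hc_top, ← Subtype.coe_le_coe]
    rw [hIic, unitInterval.volume_Iic, ENNReal.ofReal_toReal hc_top, min_eq_left hc.le]

theorem map_threshold (ρ : Measure (α × Bool)) [IsFiniteMeasure ρ] :
    ((volume : Measure I).prod (ρ.map Prod.fst)).map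
      (fun p => (p.2, decide (ENNReal.ofReal p.1 ≤ threshold ρ p.2))) = ρ := by
  set L := ρ.map Prod.fst
  have hF : Measurable fun p : I × α => (p.2, decide (ENNReal.ofReal p.1 ≤ threshold ρ p.2)) :=
    measurable_snd.prodMk (measurable_decide_ofReal_le (measurable_threshold ρ))
  refine measure_ext_of_map_fst_of_prod_true ?_ fun B hB => ?_
  · rw [Measure.map_map measurable_fst hF]
    exact (Measure.map_snd_prod).trans (by rw [measure_univ, one_smul])
  have hSB : MeasurableSet {p : I × α | p.2 ∈ B ∧ ENNReal.ofReal p.1 ≤ threshold ρ p.2} :=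
    (measurable_snd hB).inter (measurableSet_ofReal_le (measurable_threshold ρ))
  calc _ = ((volume : Measure I).prod L)
        {p | p.2 ∈ B ∧ ENNReal.ofReal p.1 ≤ threshold ρ p.2} := by
        rw [Measure.map_apply hF (hB.prod (measurableSet_singleton true))]
        congr 1; ext p; simp
    _ = ∫⁻ y, B.indicator (fun y => min (threshold ρ y) 1) y ∂L := by
        rw [Measure.prod_apply_symm hSB]
        refine lintegral_congr fun y => ?_
        by_cases hy : y ∈ B <;> simp [hy, volume_ofReal_le]
    _ = ∫⁻ y in B, threshold ρ y ∂L := by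
        rw [lintegral_indicator hB]
        refine setLIntegral_congr_fun_ae hB ?_
        filter_upwards [Measure.rnDeriv_le_one_of_le (trueLaw_le_map_fst ρ)] with y hy _
        exact min_eq_left hy
    _ = ρ (B ×ˢ {true}) := by
        rw [threshold, Measure.setLIntegral_rnDeriv (trueLaw_le_map_fst ρ).absolutelyContinuous,
          trueLaw_apply ρ hB]

theorem threshold_ae_le {ρ₁ ρ₂ : Measure (α × Bool)} [IsFiniteMeasure ρ₁] [IsFiniteMeasure ρ₂]
    (hfst : ρ₁.map Prod.fst = ρ₂.map Prod.fst) (h : trueLaw ρ₁ ≤ trueLaw ρ₂) :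
    threshold ρ₁ ≤ᵐ[ρ₁.map Prod.fst] threshold ρ₂ := by
  refine ae_le_of_forall_setLIntegral_le_of_sigmaFinite (measurable_threshold ρ₁)
    fun s hs _ => ?_
  rw [threshold, threshold, ← hfst,
    Measure.setLIntegral_rnDeriv (trueLaw_le_map_fst ρ₁).absolutelyContinuous,
    Measure.setLIntegral_rnDeriv (hfst ▸ trueLaw_le_map_fst ρ₂).absolutelyContinuous]
  exact h s

end ProdBool

abbrev OutM (K : ℕ) := ℝ × ℝ × (Fin K → Bool → Bool)

theorem measurable_treatments : Measurable fun ω : PrimM K => ω.2.2.1 := by fun_prop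

theorem measurable_pd (ζ : Fin K) (a : Bool) : Measurable fun ω : PrimM K => pd ω ζ a :=
  (Measurable.of_discrete (f := fun d : Fin K → Bool → Bool => d ζ a)).comp measurable_treatments

theorem measurable_outcomes : Measurable fun ω : PrimM K => (ω.1, ω.2.1, ω.2.2.1) := by fun_prop

theorem measurable_pz : Measurable (pz (K := K)) := by unfold pz; fun_prop

theorem measurableSet_pd_le (ζ ζ' : Fin K) (a a' : Bool) :
    MeasurableSet {ω : PrimM K | pd ω ζ a ≤ pd ω ζ' a'} :=
  measurable_treatments
    (show MeasurableSet {d : Fin K → Bool → Bool | d ζ a ≤ d ζ' a'} from .of_discrete)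

noncomputable def treatLaw (μ : Measure (PrimM K)) (ζ : Fin K) (a : Bool) : Measure (ℝ × Bool) :=
  μ.map fun ω => (ω.2.1, pd ω ζ a)

theorem measurable_treatPair (ζ : Fin K) (a : Bool) :
    Measurable fun ω : PrimM K => (ω.2.1, pd ω ζ a) :=
  (measurable_fst.comp measurable_snd).prodMk (measurable_pd ζ a)

theorem measurable_outM_treatPair (ζ : Fin K) (a : Bool) :
    Measurable fun w : OutM K => (w.2.1, w.2.2 ζ a) :=
  (measurable_fst.comp measurable_snd).prodMk
    ((Measurable.of_discrete (f := fun d : Fin K → Bool → Bool => d ζ a)).comp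
      (measurable_snd.comp measurable_snd))

theorem map_fst_treatLaw (μ : Measure (PrimM K)) (ζ : Fin K) (a : Bool) :
    (treatLaw μ ζ a).map Prod.fst = μ.map fun ω => ω.2.1 := by
  rw [treatLaw, Measure.map_map measurable_fst (measurable_treatPair ζ a)]
  rfl

theorem trueLaw_treatLaw_apply (μ : Measure (PrimM K)) (ζ : Fin K) (a : Bool) {B : Set ℝ}
    (hB : MeasurableSet B) :
    trueLaw (treatLaw μ ζ a) B = μ {ω | ω.2.1 ∈ B ∧ pd ω ζ a = true} := by
  rw [trueLaw_apply _ hB, treatLaw,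
    Measure.map_apply (measurable_treatPair ζ a) (hB.prod (measurableSet_singleton true))]
  rfl

instance (μ : Measure (PrimM K)) [IsFiniteMeasure μ] (ζ : Fin K) (a : Bool) :
    IsFiniteMeasure (treatLaw μ ζ a) := by
  rw [treatLaw]; infer_instance

theorem trueLaw_treatLaw_mono {μ : Measure (PrimM K)} [IsProbabilityMeasure μ] {ζ ζ' : Fin K}
    {a a' : Bool} (h : μ {ω | pd ω ζ a ≤ pd ω ζ' a'} = 1) :
    trueLaw (treatLaw μ ζ a) ≤ trueLaw (treatLaw μ ζ' a') := by
  have hae : ∀ᵐ ω ∂μ, pd ω ζ a ≤ pd ω ζ' a' :=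
    (ae_iff_measure_eq (measurableSet_pd_le ζ ζ' a a').nullMeasurableSet).2
      (h.trans measure_univ.symm)
  refine Measure.le_iff.2 fun B hB => ?_
  rw [trueLaw_treatLaw_apply μ ζ a hB, trueLaw_treatLaw_apply μ ζ' a' hB]
  refine measure_mono_ae (hae.mono fun ω hω ⟨hωB, htrue⟩ => ⟨hωB, ?_⟩)
  rw [htrue] at hω
  exact top_le_iff.1 hω

noncomputable def indepModel (ν : Measure (OutM K)) (π : Measure (Fin K)) :
    Measure (PrimM K) :=
  (ν.prod π).map fun p => (p.1.1, p.1.2.1, p.1.2.2, p.2)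

section IndepModel

variable (ν : Measure (OutM K)) (π : Measure (Fin K))

theorem measurable_indepModel_map :
    Measurable fun p : OutM K × Fin K => ((p.1.1, p.1.2.1, p.1.2.2, p.2) : PrimM K) := by
  fun_prop

instance [IsProbabilityMeasure ν] [IsProbabilityMeasure π] :
    IsProbabilityMeasure (indepModel ν π) :=
  Measure.isProbabilityMeasure_map (measurable_indepModel_map).aemeasurable

theorem indepModel_apply {s : Set (OutM K)} (hs : MeasurableSet s)
    (t : Set (Fin K)) :
    indepModel ν π {ω | (ω.1, ω.2.1, ω.2.2.1) ∈ s ∧ pz ω ∈ t} = ν s * π t := by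
  rw [indepModel, Measure.map_apply measurable_indepModel_map
    (show MeasurableSet {ω : PrimM K | (ω.1, ω.2.1, ω.2.2.1) ∈ s ∧ pz ω ∈ t} from
      (measurable_outcomes hs).inter (measurable_pz .of_discrete)), ← Measure.prod_prod]
  rfl

theorem indepModel_apply_outcomes [IsProbabilityMeasure π]
    {s : Set (OutM K)} (hs : MeasurableSet s) :
    indepModel ν π {ω | (ω.1, ω.2.1, ω.2.2.1) ∈ s} = ν s := by
  simpa using indepModel_apply ν π hs univ

theorem le_indepModel_apply_outcomes [IsProbabilityMeasure π]
    (s : Set (OutM K)) :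
    ν s ≤ indepModel ν π {ω | (ω.1, ω.2.1, ω.2.2.1) ∈ s} :=
  calc ν s = (ν.prod π) (s ×ˢ univ) := by rw [Measure.prod_prod, measure_univ, mul_one]
    _ ≤ _ := (measure_mono fun _ hp => hp.1).trans
      (Measure.le_map_apply measurable_indepModel_map.aemeasurable
        {ω : PrimM K | (ω.1, ω.2.1, ω.2.2.1) ∈ s})

theorem map_pz_indepModel [IsProbabilityMeasure ν] : (indepModel ν π).map pz = π := by
  ext t ht
  have h := indepModel_apply ν π MeasurableSet.univ t
  simp only [mem_univ, true_and, measure_univ, one_mul] at h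
  rwa [Measure.map_apply measurable_pz ht]

theorem ivValid_indepModel [IsProbabilityMeasure ν] [IsProbabilityMeasure π] :
    IVvalid (indepModel ν π) := by
  intro A z hA
  have hpz : indepModel ν π {ω | pz ω = z} = π {z} := by
    simpa using indepModel_apply ν π MeasurableSet.univ {z}
  rw [indepModel_apply_outcomes ν π hA, hpz]
  exact indepModel_apply ν π hA {z}

theorem treatLaw_indepModel [IsProbabilityMeasure π] (ζ : Fin K) (a : Bool) :
    treatLaw (indepModel ν π) ζ a = ν.map fun w => (w.2.1, w.2.2 ζ a) := by
  rw [treatLaw, indepModel, Measure.map_map (measurable_treatPair ζ a) measurable_indepModel_map,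
    show ((fun ω : PrimM K => (ω.2.1, pd ω ζ a)) ∘ fun p => (p.1.1, p.1.2.1, p.1.2.2, p.2)) =
      (fun w : OutM K => (w.2.1, w.2.2 ζ a)) ∘ Prod.fst from rfl,
    ← Measure.map_map (measurable_outM_treatPair ζ a) measurable_fst, Measure.map_fst_prod,
    measure_univ, one_smul]

end IndepModel

theorem measurable_pd_pz (a : Bool) : Measurable fun ω : PrimM K => pd ω (pz ω) a :=
  (Measurable.of_discrete (f := fun q : (Fin K → Bool → Bool) × Fin K => q.1 q.2 a)).comp
    (measurable_treatments.prodMk measurable_pz)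

theorem measurable_obsMap : Measurable (obsMap (K := K)) :=
  (Measurable.ite ((measurable_pd_pz false) (measurableSet_singleton true))
    (measurable_fst.comp measurable_snd) measurable_fst).prodMk
    ((measurable_pd_pz false).prodMk measurable_pz)

def ydzMap (a : Bool) (ω : PrimM K) : ObsM K := (ω.2.1, pd ω (pz ω) a, pz ω)

theorem measurable_ydzMap (a : Bool) : Measurable (ydzMap (K := K) a) :=
  (measurable_fst.comp measurable_snd).prodMk ((measurable_pd_pz a).prodMk measurable_pz)

theorem map_ydzMap_apply {ν : Measure (PrimM K)} (hIV : IVvalid ν) (a : Bool) {B : Set ℝ}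
    (hB : MeasurableSet B) (d : Bool) (z : Fin K) :
    ν.map (ydzMap a) (B ×ˢ {(d, z)}) = treatLaw ν z a (B ×ˢ {d}) * ν.map pz {z} := by
  have hA : MeasurableSet {w : OutM K | (w.2.1, w.2.2 z a) ∈ B ×ˢ {d}} :=
    measurable_outM_treatPair z a (hB.prod (measurableSet_singleton d))
  have hpre : ydzMap a ⁻¹' (B ×ˢ {(d, z)}) = {ω | (ω.1, ω.2.1, ω.2.2.1) ∈
      {w : OutM K | (w.2.1, w.2.2 z a) ∈ B ×ˢ {d}} ∧ pz ω = z} := by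
    ext ω
    simp only [ydzMap, pd, mem_preimage, mem_prod, mem_singleton_iff, Prod.mk.injEq,
      mem_ofPred_eq]
    constructor
    · rintro ⟨hωB, hd, rfl⟩
      exact ⟨⟨hωB, hd⟩, rfl⟩
    · rintro ⟨⟨hωB, hd⟩, rfl⟩
      exact ⟨hωB, hd, rfl⟩
  rw [Measure.map_apply (measurable_ydzMap a) (hB.prod (measurableSet_singleton _)), hpre,
    hIV _ z hA, treatLaw,
    Measure.map_apply (measurable_treatPair z a) (hB.prod (measurableSet_singleton _)),
    Measure.map_apply measurable_pz (measurableSet_singleton z)]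
  rfl

theorem map_ydzMap_congr {ν₁ ν₂ : Measure (PrimM K)} (hIV₁ : IVvalid ν₁) (hIV₂ : IVvalid ν₂)
    (a : Bool) (hpz : ν₁.map pz = ν₂.map pz) (htreat : ∀ ζ, treatLaw ν₁ ζ a = treatLaw ν₂ ζ a) :
    ν₁.map (ydzMap a) = ν₂.map (ydzMap a) :=
  measure_ext_of_prod_singleton fun B hB ⟨d, z⟩ => by
    rw [map_ydzMap_apply hIV₁ a hB, map_ydzMap_apply hIV₂ a hB, htreat, hpz]

theorem measure_treated_eq (ν : Measure (PrimM K)) :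
    ν {ω | pd ω (pz ω) true = true} = ν.map (ydzMap true) {o | o.2.1 = true} :=
  (Measure.map_apply (measurable_ydzMap true)
    ((measurable_fst.comp measurable_snd) (measurableSet_singleton true))).symm

noncomputable def maskY (o : ObsM K) : ℝ := if o.2.1 then o.1 else 0

theorem measurable_maskY : Measurable (maskY (K := K)) :=
  Measurable.ite ((measurable_fst.comp measurable_snd) (measurableSet_singleton true))
    measurable_fst measurable_const

theorem ae_fst_eq_zero {ν : Measure (PrimM K)} [IsProbabilityMeasure ν]
    (h : ν {ω | ω.1 = 0} = 1) : ∀ᵐ ω ∂ν, ω.1 = 0 :=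
  (ae_iff_measure_eq (measurable_fst (measurableSet_singleton 0)).nullMeasurableSet).2
    (h.trans measure_univ.symm)

theorem map_obsMap_eq {ν : Measure (PrimM K)} (hY0 : ∀ᵐ ω ∂ν, ω.1 = 0) :
    ν.map obsMap = (ν.map (ydzMap false)).map fun o => (maskY o, o.2) := by
  rw [Measure.map_map (measurable_maskY.prodMk measurable_snd) (measurable_ydzMap false)]
  refine Measure.map_congr (hY0.mono fun ω hω => ?_)
  simp only [obsMap, obsY, hω]
  rfl

theorem theta_eq_integral_maskY {ν : Measure (PrimM K)} (hY0 : ∀ᵐ ω ∂ν, ω.1 = 0) :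
    theta ν = ∫ o, maskY o ∂(ν.map (ydzMap true)) := by
  rw [theta, integral_map (measurable_ydzMap true).aemeasurable
    measurable_maskY.aestronglyMeasurable]
  exact integral_congr_ae (hY0.mono fun ω hω => by simp only [cfY, hω]; rfl)

theorem map_pz_of_generates {ν : Measure (PrimM K)} {P : Measure (ObsM K)}
    (h : generates ν P) : ν.map pz = P.map fun o => o.2.2 := by
  rw [h, Measure.map_map (by fun_prop) measurable_obsMap]
  rfl

theorem generates_apply_true {ν : Measure (PrimM K)} {P : Measure (ObsM K)}
    (hgen : generates ν P) (hIV : IVvalid ν) {B : Set ℝ} (hB : MeasurableSet B) (z : Fin K) :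
    P (B ×ˢ {(true, z)}) = trueLaw (treatLaw ν z false) B * P {o | o.2.2 = z} := by
  have hBz : MeasurableSet (B ×ˢ {(true, z)}) := hB.prod (measurableSet_singleton _)
  have hpre : obsMap ⁻¹' (B ×ˢ {(true, z)}) = ydzMap false ⁻¹' (B ×ˢ {(true, z)}) := by
    ext ω
    by_cases hd : obsD ω <;> simp_all [obsMap, ydzMap, obsY, obsD]
  calc P (B ×ˢ {(true, z)}) = ν.map (ydzMap false) (B ×ˢ {(true, z)}) := by
        rw [hgen, Measure.map_apply measurable_obsMap hBz, hpre,
          Measure.map_apply (measurable_ydzMap false) hBz]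
    _ = trueLaw (treatLaw ν z false) B * ν.map pz {z} := by
        rw [map_ydzMap_apply hIV false hB, trueLaw_apply _ hB]
    _ = _ := by
        rw [map_pz_of_generates hgen,
          Measure.map_apply (by fun_prop) (measurableSet_singleton z)]
        rfl

theorem trueLaw_treatLaw_eq_of_generates {ν₁ ν₂ : Measure (PrimM K)} {P : Measure (ObsM K)}
    [IsFiniteMeasure P] (hgen₁ : generates ν₁ P) (hgen₂ : generates ν₂ P) (hIV₁ : IVvalid ν₁)
    (hIV₂ : IVvalid ν₂) {z : Fin K} (hz : P {o | o.2.2 = z} ≠ 0) :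
    trueLaw (treatLaw ν₁ z false) = trueLaw (treatLaw ν₂ z false) :=
  Measure.ext fun _ hB => (ENNReal.mul_left_inj hz (measure_ne_top P _)).1
    ((generates_apply_true hgen₁ hIV₁ hB z).symm.trans (generates_apply_true hgen₂ hIV₂ hB z))

noncomputable def rearrangedOutcomes (μ : Measure (PrimM K)) (p : I × ℝ) : OutM K :=
  (0, p.2, fun ζ a => decide (ENNReal.ofReal p.1 ≤ threshold (treatLaw μ ζ a) p.2))

noncomputable def rearrange (μ : Measure (PrimM K)) : Measure (PrimM K) :=
  indepModel (((volume : Measure I).prod (μ.map fun ω => ω.2.1)).map (rearrangedOutcomes μ))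
    (μ.map pz)

theorem measurable_rearrangedOutcomes (μ : Measure (PrimM K)) :
    Measurable (rearrangedOutcomes μ) :=
  measurable_const.prodMk (measurable_snd.prodMk (measurable_pi_lambda _ fun _ =>
    measurable_pi_lambda _ fun _ => measurable_decide_ofReal_le (measurable_threshold _)))

section Rearrange

variable (μ : Measure (PrimM K)) [IsProbabilityMeasure μ]

instance : IsProbabilityMeasure (μ.map pz) :=
  Measure.isProbabilityMeasure_map measurable_pz.aemeasurable

instance : IsProbabilityMeasure (μ.map fun ω => ω.2.1) :=
  Measure.isProbabilityMeasure_map (measurable_fst.comp measurable_snd).aemeasurable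

instance : IsProbabilityMeasure
    (((volume : Measure I).prod (μ.map fun ω => ω.2.1)).map (rearrangedOutcomes μ)) :=
  Measure.isProbabilityMeasure_map (measurable_rearrangedOutcomes μ).aemeasurable

instance : IsProbabilityMeasure (rearrange μ) := by
  rw [rearrange]; infer_instance

theorem ivValid_rearrange : IVvalid (rearrange μ) := ivValid_indepModel _ _

theorem map_pz_rearrange : (rearrange μ).map pz = μ.map pz := map_pz_indepModel _ _

theorem treatLaw_rearrange (ζ : Fin K) (a : Bool) :
    treatLaw (rearrange μ) ζ a = treatLaw μ ζ a := by
  rw [rearrange, treatLaw_indepModel,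
    Measure.map_map (measurable_outM_treatPair ζ a) (measurable_rearrangedOutcomes μ),
    ← map_fst_treatLaw μ ζ a]
  exact map_threshold _

theorem rearrange_Y0 : rearrange μ {ω | ω.1 = 0} = 1 := by
  have hs : MeasurableSet {w : OutM K | w.1 = 0} :=
    measurable_fst (measurableSet_singleton 0)
  refine (indepModel_apply_outcomes _ (μ.map pz) hs).trans ?_
  rw [Measure.map_apply (measurable_rearrangedOutcomes μ) hs,
    show rearrangedOutcomes μ ⁻¹' {w | w.1 = 0} = univ from eq_univ_of_forall fun _ => rfl,
    measure_univ]

theorem rearrange_pd_le {ζ ζ' : Fin K} {a a' : Bool}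
    (h : trueLaw (treatLaw μ ζ a) ≤ trueLaw (treatLaw μ ζ' a')) :
    rearrange μ {ω | pd ω ζ a ≤ pd ω ζ' a'} = 1 := by
  set L := μ.map fun ω => ω.2.1
  set G := {y | threshold (treatLaw μ ζ a) y ≤ threshold (treatLaw μ ζ' a') y}
  have hLG : L G = 1 := by
    have hae := threshold_ae_le (by rw [map_fst_treatLaw, map_fst_treatLaw]) h
    rw [map_fst_treatLaw] at hae
    exact ((ae_iff_measure_eq (measurableSet_le (measurable_threshold _)
      (measurable_threshold _)).nullMeasurableSet).1 hae).trans measure_univ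
  have hs : MeasurableSet {w : OutM K | w.2.2 ζ a ≤ w.2.2 ζ' a'} :=
    (measurable_snd.comp measurable_snd)
      (show MeasurableSet {d : Fin K → Bool → Bool | d ζ a ≤ d ζ' a'} from .of_discrete)
  refine (indepModel_apply_outcomes _ (μ.map pz) hs).trans (le_antisymm prob_le_one ?_)
  calc 1 = ((volume : Measure I).prod L) (univ ×ˢ G) := by
        rw [Measure.prod_prod, measure_univ, one_mul, hLG]
    _ ≤ _ := by
        rw [Measure.map_apply (measurable_rearrangedOutcomes μ) hs]
        exact measure_mono fun p ⟨_, hp⟩ => Bool.le_iff_imp.2 fun hu =>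
          decide_eq_true ((of_decide_eq_true hu).trans hp)

theorem rearrange_suppY {𝒴 : Set ℝ} (h0 : (0 : ℝ) ∈ 𝒴) (h : suppY 𝒴 μ) :
    suppY 𝒴 (rearrange μ) := by
  set L := μ.map fun ω => ω.2.1
  refine le_antisymm prob_le_one ?_
  calc 1 = μ {ω | ω.1 ∈ 𝒴 ∧ ω.2.1 ∈ 𝒴} := h.symm
    _ ≤ μ ((fun ω => ω.2.1) ⁻¹' 𝒴) := measure_mono fun _ hω => hω.2
    _ ≤ L 𝒴 := Measure.le_map_apply (measurable_fst.comp measurable_snd).aemeasurable 𝒴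
    _ = ((volume : Measure I).prod L) (univ ×ˢ 𝒴) := by
        rw [Measure.prod_prod, measure_univ, one_mul]
    _ ≤ ((volume : Measure I).prod L)
        (rearrangedOutcomes μ ⁻¹' {w | w.1 ∈ 𝒴 ∧ w.2.1 ∈ 𝒴}) :=
        measure_mono fun _ hp => ⟨h0, hp.2⟩
    _ ≤ (((volume : Measure I).prod L).map (rearrangedOutcomes μ)) {w | w.1 ∈ 𝒴 ∧ w.2.1 ∈ 𝒴} :=
        Measure.le_map_apply (measurable_rearrangedOutcomes μ).aemeasurable _
    _ ≤ _ := le_indepModel_apply_outcomes _ (μ.map pz) _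

end Rearrange

section RearrangeModel

variable {μ : Measure (PrimM K)} [IsProbabilityMeasure μ]

theorem map_ydzMap_rearrange (hIV : IVvalid μ) (a : Bool) :
    (rearrange μ).map (ydzMap a) = μ.map (ydzMap a) :=
  map_ydzMap_congr (ivValid_rearrange μ) hIV a (map_pz_rearrange μ)
    fun ζ => treatLaw_rearrange μ ζ a

theorem rearrange_mem_famAlpha {𝒴 : Set ℝ} {α : ℝ} (h0 : (0 : ℝ) ∈ 𝒴)
    (hμ : μ ∈ famAlpha K 𝒴 α) : rearrange μ ∈ famAlpha K 𝒴 α := by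
  obtain ⟨-, hIV, hpol, hsupp, hquota, -⟩ := hμ
  refine ⟨inferInstance, ivValid_rearrange μ,
    fun z => rearrange_pd_le μ (trueLaw_treatLaw_mono (hpol z)), rearrange_suppY μ h0 hsupp,
    ?_, rearrange_Y0 μ⟩
  rw [measure_treated_eq, map_ydzMap_rearrange hIV, ← measure_treated_eq, hquota]

theorem generates_rearrange {P : Measure (ObsM K)} (hIV : IVvalid μ)
    (hY0 : μ {ω | ω.1 = 0} = 1) (hgen : generates μ P) : generates (rearrange μ) P := by
  rw [generates, map_obsMap_eq (ae_fst_eq_zero (rearrange_Y0 μ)), map_ydzMap_rearrange hIV,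
    ← map_obsMap_eq (ae_fst_eq_zero hY0)]
  exact hgen

theorem theta_rearrange (hIV : IVvalid μ) (hY0 : μ {ω | ω.1 = 0} = 1) :
    theta (rearrange μ) = theta μ := by
  rw [theta_eq_integral_maskY (ae_fst_eq_zero (rearrange_Y0 μ)), map_ydzMap_rearrange hIV,
    ← theta_eq_integral_maskY (ae_fst_eq_zero hY0)]

theorem ivMono_rearrange {μ₀ : Measure (PrimM K)} [IsProbabilityMeasure μ₀] (hmono₀ : ivMono μ₀)
    (hQ : ∀ z, trueLaw (treatLaw μ z false) = trueLaw (treatLaw μ₀ z false)) :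
    ivMono (rearrange μ) := fun z z' =>
  (hmono₀ z z').imp
    (fun h => rearrange_pd_le μ (by rw [hQ, hQ]; exact trueLaw_treatLaw_mono h))
    (fun h => rearrange_pd_le μ (by rw [hQ, hQ]; exact trueLaw_treatLaw_mono h))

end RearrangeModel

theorem statement2_general {K : ℕ} (𝒴 : Set ℝ) (h0 : (0 : ℝ) ∈ 𝒴)
    (α : ℝ)
    (P : Measure (ObsM K)) [IsProbabilityMeasure P]
    (hPz : ∀ z : Fin K, 0 < P {o | o.2.2 = z}) :
    (ThetaI P (famAlphaMon K 𝒴 α)).Nonempty →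
      ThetaI P (famAlphaMon K 𝒴 α) = ThetaI P (famAlpha K 𝒴 α) := by
  rintro ⟨-, μ₀, ⟨⟨hμ₀, hIV₀, -⟩, hmono₀⟩, hgen₀, -⟩
  refine Subset.antisymm (fun t ⟨μ, hμ, hgen, ht⟩ => ⟨μ, hμ.1, hgen, ht⟩) ?_
  rintro t ⟨μ, hμ, hgen, rfl⟩
  obtain ⟨_, hIV, -, -, -, hY0⟩ := id hμ
  have hQ : ∀ z, trueLaw (treatLaw μ z false) = trueLaw (treatLaw μ₀ z false) := fun z =>
    trueLaw_treatLaw_eq_of_generates hgen hgen₀ hIV hIV₀ (hPz z).ne'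
  exact ⟨rearrange μ, ⟨rearrange_mem_famAlpha h0 hμ, ivMono_rearrange hmono₀ hQ⟩,
    generates_rearrange hIV hY0 hgen, theta_rearrange hIV hY0⟩

/-- Proposition 2: with a known outcome under `D = 0`, IV
monotonicity has no identifying power: if the identified set under IV monotonicity
is nonempty, it coincides with the identified set without IV monotonicity. -/
theorem statement2 {K : ℕ} (𝒴 : Set ℝ) (hY : IsCompact 𝒴) (h0 : (0 : ℝ) ∈ 𝒴)
    (α : ℝ) (hα : α ∈ Set.Icc (0 : ℝ) 1)
    (P : Measure (ObsM K)) [IsProbabilityMeasure P]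
    (hPz : ∀ z : Fin K, 0 < P {o | o.2.2 = z}) :
    (ThetaI P (famAlphaMon K 𝒴 α)).Nonempty →
      ThetaI P (famAlphaMon K 𝒴 α) = ThetaI P (famAlpha K 𝒴 α) :=
  statement2_general 𝒴 h0 α P hPz

end IVM
end

section
/- Let P*, P̃* be two primitive distributions, each satisfying IV validity, with the same marginal distribution of Z, and suppose that for every z ∈ 𝒵 the law of (Y(0), Y(1), D(z,0), D(z,1)) under P* equals the law of (Y(0), Y(1), D(z,0), D(z,1)) under P̃*. Then (a) P* and P̃* generate the same observed data distribution, i.e., the law of (Y(D(Z,0)), D(Z,0), Z) under P* equals that under P̃*, and (b) E_{P*}[Y(D(Z,1))] = E_{P̃*}[Y(D(Z,1))]. In particular, both the observed data distribution and the average counterfactual outcome depend on a valid primitive distribution only through its collection of judge-wise marginals and the marginal distribution of Z, and not on the joint distribution of (D(z,·), D(z',·)) across distinct z ≠ z'. -/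
open Finset
open scoped Classical

namespace IVPol

variable {Y : Finset ℝ} {K : ℕ}

/-- Average counterfactual outcome `θ = E[Y(D(Z,1))]`. -/
noncomputable def theta (Ps : Dist (Prim Y K)) : ℝ := Ps.exp cfY

-- AUX

noncomputable def q (Ps : Dist (Prim Y K)) (a b : Y) (g : Fin K → Bool → Bool) : ℝ :=
  Ps.pr {ω | ω.1 = a ∧ ω.2.1 = b ∧ ω.2.2.1 = g}

lemma pr_eq {α : Type*} [Fintype α] (P : Dist α) (A : Set α) :
    P.pr A = ∑ a, if a ∈ A then P.p a else 0 := rfl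

lemma sum_prim (f : Prim Y K → ℝ) :
    ∑ ω, f ω = ∑ a, ∑ b, ∑ g, ∑ z, f (a, b, g, z) := by
  rw [Fintype.sum_prod_type]
  refine Finset.sum_congr rfl fun a _ => ?_
  rw [Fintype.sum_prod_type]
  refine Finset.sum_congr rfl fun b _ => ?_
  rw [Fintype.sum_prod_type]

lemma sum_trip (f : Y × Y × (Fin K → Bool → Bool) → ℝ) :
    ∑ t, f t = ∑ a, ∑ b, ∑ g, f (a, b, g) := by
  rw [Fintype.sum_prod_type]
  refine Finset.sum_congr rfl fun a _ => ?_
  rw [Fintype.sum_prod_type]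

lemma sum_quad (f : Y × Y × Bool × Bool → ℝ) :
    ∑ m, f m = ∑ y0, ∑ y1, ∑ d0, ∑ d1, f (y0, y1, d0, d1) := by
  rw [Fintype.sum_prod_type]
  refine Finset.sum_congr rfl fun a _ => ?_
  rw [Fintype.sum_prod_type]
  refine Finset.sum_congr rfl fun b _ => ?_
  rw [Fintype.sum_prod_type]

lemma my_ite_congr {α : Sort*} {P Q : Prop} (iP : Decidable P) (iQ : Decidable Q) {x y u v : α}
    (h : P ↔ Q) (ht : x = u) (he : y = v) : @ite α P iP x y = @ite α Q iQ u v := by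
  by_cases hq : Q
  · rw [if_pos (h.mpr hq), if_pos hq, ht]
  · rw [if_neg (fun hp => hq (h.mp hp)), if_neg hq, he]

lemma atom (Ps : Dist (Prim Y K)) (a b : Y) (g : Fin K → Bool → Bool) (z : Fin K) :
    Ps.pr {ω : Prim Y K | ω.1 = a ∧ ω.2.1 = b ∧ ω.2.2.1 = g ∧ ω.2.2.2 = z}
      = Ps.p (a, b, g, z) := by
  rw [pr_eq]
  refine Eq.trans (Finset.sum_eq_single ((a, b, g, z) : Prim Y K) ?_ ?_) ?_
  · intro ω _ hne
    refine if_neg fun h => hne ?_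
    obtain ⟨h1, h2, h3, h4⟩ := h
    exact Prod.ext_iff.mpr ⟨h1, Prod.ext_iff.mpr ⟨h2, Prod.ext_iff.mpr ⟨h3, h4⟩⟩⟩
  · intro hmem; exact absurd (Finset.mem_univ _) hmem
  · exact if_pos ⟨rfl, rfl, rfl, rfl⟩

lemma hp_atom (Ps : Dist (Prim Y K)) (h : IVvalid Ps) (a b : Y)
    (g : Fin K → Bool → Bool) (z : Fin K) :
    Ps.p (a, b, g, z) = q Ps a b g * Ps.pr {ω | pz ω = z} := by
  rw [← atom Ps a b g z, h a b g z]; rfl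

lemma q_eq (Ps : Dist (Prim Y K)) (a b : Y) (g : Fin K → Bool → Bool) :
    q Ps a b g = ∑ z, Ps.p (a, b, g, z) := by
  unfold q Dist.pr
  refine Eq.trans (sum_prim _) ?_
  refine Eq.trans (Finset.sum_congr rfl fun a' _ => Finset.sum_congr rfl fun b' _ =>
    Finset.sum_congr rfl fun g' _ => Finset.sum_congr rfl fun z' _ =>
      (my_ite_congr (Classical.propDecidable _) (inferInstance)
        (Iff.intro (fun h => h) (fun h => h) :
          ((a', b', g', z') ∈ {ω : Prim Y K | ω.1 = a ∧ ω.2.1 = b ∧ ω.2.2.1 = g})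
            ↔ (a' = a ∧ b' = b ∧ g' = g)) rfl rfl :
        _ = if (a' = a ∧ b' = b ∧ g' = g) then Ps.p (a', b', g', z') else 0)) ?_
  simp only [ite_and, Finset.sum_ite_irrel, Finset.sum_const_zero,
    Finset.sum_ite_eq', Finset.mem_univ, if_true]

lemma marginal_eq (Ps : Dist (Prim Y K)) (z : Fin K) (y0 y1 : Y) (d0 d1 : Bool) :
    marginal Ps z y0 y1 d0 d1
      = ∑ a, ∑ b, ∑ g, if (a = y0 ∧ b = y1 ∧ g z false = d0 ∧ g z true = d1)
          then q Ps a b g else 0 := by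
  unfold marginal Dist.pr pd
  refine Eq.trans (sum_prim _) ?_
  refine Eq.trans (Finset.sum_congr rfl fun a _ => Finset.sum_congr rfl fun b _ =>
    Finset.sum_congr rfl fun g _ => Finset.sum_congr rfl fun z' _ =>
      (my_ite_congr (Classical.propDecidable _) (inferInstance)
        (Iff.intro (fun h => h) (fun h => h) :
          ((a, b, g, z') ∈ {ω : Prim Y K | ω.1 = y0 ∧ ω.2.1 = y1 ∧
            ω.2.2.1 z false = d0 ∧ ω.2.2.1 z true = d1})
            ↔ (a = y0 ∧ b = y1 ∧ g z false = d0 ∧ g z true = d1)) rfl rfl :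
        _ = if (a = y0 ∧ b = y1 ∧ g z false = d0 ∧ g z true = d1)
          then Ps.p (a, b, g, z') else 0)) ?_
  refine Finset.sum_congr rfl fun a _ => Finset.sum_congr rfl fun b _ =>
    Finset.sum_congr rfl fun g _ => ?_
  rw [q_eq]
  by_cases hc : (a = y0 ∧ b = y1 ∧ g z false = d0 ∧ g z true = d1)
  · rw [if_pos hc]
    exact Finset.sum_congr rfl fun z' _ => if_pos hc
  · rw [if_neg hc]
    exact Finset.sum_eq_zero fun z' _ => if_neg hc

set_option maxHeartbeats 1000000 in
lemma sum_q_eq (Ps : Dist (Prim Y K)) (z : Fin K) (F : Y → Y → Bool → Bool → ℝ) :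
    ∑ a, ∑ b, ∑ g, q Ps a b g * F a b (g z false) (g z true)
      = ∑ y0, ∑ y1, ∑ d0, ∑ d1, marginal Ps z y0 y1 d0 d1 * F y0 y1 d0 d1 := by
  have key : ∀ t : Y × Y × (Fin K → Bool → Bool),
      q Ps t.1 t.2.1 t.2.2 * F t.1 t.2.1 (t.2.2 z false) (t.2.2 z true)
        = ∑ m : Y × Y × Bool × Bool,
            if (t.1 = m.1 ∧ t.2.1 = m.2.1 ∧ t.2.2 z false = m.2.2.1 ∧ t.2.2 z true = m.2.2.2)
              then q Ps t.1 t.2.1 t.2.2 * F m.1 m.2.1 m.2.2.1 m.2.2.2 else 0 := by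
    intro t
    have step1 : ∀ m : Y × Y × Bool × Bool,
        (if (t.1 = m.1 ∧ t.2.1 = m.2.1 ∧ t.2.2 z false = m.2.2.1 ∧ t.2.2 z true = m.2.2.2)
          then q Ps t.1 t.2.1 t.2.2 * F m.1 m.2.1 m.2.2.1 m.2.2.2 else 0)
        = (if m = (t.1, t.2.1, t.2.2 z false, t.2.2 z true)
          then q Ps t.1 t.2.1 t.2.2 * F m.1 m.2.1 m.2.2.1 m.2.2.2 else 0) := by
      intro m
      refine if_congr ?_ rfl rfl
      constructor
      · rintro ⟨h1, h2, h3, h4⟩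
        exact Prod.ext_iff.mpr ⟨h1.symm, Prod.ext_iff.mpr ⟨h2.symm,
          Prod.ext_iff.mpr ⟨h3.symm, h4.symm⟩⟩⟩
      · rintro rfl; exact ⟨rfl, rfl, rfl, rfl⟩
    rw [Finset.sum_congr rfl fun m _ => step1 m,
      Fintype.sum_ite_eq' ((t.1, t.2.1, t.2.2 z false, t.2.2 z true) : Y × Y × Bool × Bool)
        (fun m => q Ps t.1 t.2.1 t.2.2 * F m.1 m.2.1 m.2.2.1 m.2.2.2)]
  calc ∑ a, ∑ b, ∑ g, q Ps a b g * F a b (g z false) (g z true)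
      = ∑ t : Y × Y × (Fin K → Bool → Bool),
          q Ps t.1 t.2.1 t.2.2 * F t.1 t.2.1 (t.2.2 z false) (t.2.2 z true) :=
        (sum_trip (fun t => q Ps t.1 t.2.1 t.2.2 * F t.1 t.2.1 (t.2.2 z false) (t.2.2 z true))).symm
    _ = ∑ t : Y × Y × (Fin K → Bool → Bool), ∑ m : Y × Y × Bool × Bool,
          if (t.1 = m.1 ∧ t.2.1 = m.2.1 ∧ t.2.2 z false = m.2.2.1 ∧ t.2.2 z true = m.2.2.2)
            then q Ps t.1 t.2.1 t.2.2 * F m.1 m.2.1 m.2.2.1 m.2.2.2 else 0 :=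
        Finset.sum_congr rfl fun t _ => key t
    _ = ∑ m : Y × Y × Bool × Bool, ∑ t : Y × Y × (Fin K → Bool → Bool),
          if (t.1 = m.1 ∧ t.2.1 = m.2.1 ∧ t.2.2 z false = m.2.2.1 ∧ t.2.2 z true = m.2.2.2)
            then q Ps t.1 t.2.1 t.2.2 * F m.1 m.2.1 m.2.2.1 m.2.2.2 else 0 :=
        Finset.sum_comm
    _ = ∑ m : Y × Y × Bool × Bool,
          (∑ t : Y × Y × (Fin K → Bool → Bool),
            if (t.1 = m.1 ∧ t.2.1 = m.2.1 ∧ t.2.2 z false = m.2.2.1 ∧ t.2.2 z true = m.2.2.2)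
              then q Ps t.1 t.2.1 t.2.2 else 0) * F m.1 m.2.1 m.2.2.1 m.2.2.2 := by
        refine Finset.sum_congr rfl fun m _ => ?_
        rw [Finset.sum_mul]
        refine Finset.sum_congr rfl fun t _ => ?_
        by_cases hc : (t.1 = m.1 ∧ t.2.1 = m.2.1 ∧ t.2.2 z false = m.2.2.1 ∧ t.2.2 z true = m.2.2.2)
        · rw [if_pos hc, if_pos hc]
        · rw [if_neg hc, if_neg hc, zero_mul]
    _ = ∑ m : Y × Y × Bool × Bool,
          marginal Ps z m.1 m.2.1 m.2.2.1 m.2.2.2 * F m.1 m.2.1 m.2.2.1 m.2.2.2 := by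
        refine Finset.sum_congr rfl fun m _ => ?_
        rw [marginal_eq, ← sum_trip (fun t => if (t.1 = m.1 ∧ t.2.1 = m.2.1 ∧
          t.2.2 z false = m.2.2.1 ∧ t.2.2 z true = m.2.2.2) then q Ps t.1 t.2.1 t.2.2 else 0)]
    _ = ∑ y0, ∑ y1, ∑ d0, ∑ d1, marginal Ps z y0 y1 d0 d1 * F y0 y1 d0 d1 :=
        sum_quad (fun m => marginal Ps z m.1 m.2.1 m.2.2.1 m.2.2.2 * F m.1 m.2.1 m.2.2.1 m.2.2.2)

lemma sum_trip' (f : Y → Y → (Fin K → Bool → Bool) → ℝ) :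
    ∑ t : Y × Y × (Fin K → Bool → Bool), f t.1 t.2.1 t.2.2 = ∑ a, ∑ b, ∑ g, f a b g :=
  sum_trip (fun t => f t.1 t.2.1 t.2.2)

lemma slice_marg (Ps : Dist (Prim Y K)) (h : IVvalid Ps) (z : Fin K)
    (C : Y → Y → Bool → Bool → Prop) :
    Ps.pr {ω : Prim Y K | C ω.1 ω.2.1 (ω.2.2.1 z false) (ω.2.2.1 z true) ∧ ω.2.2.2 = z}
      = (∑ y0, ∑ y1, ∑ d0, ∑ d1, if C y0 y1 d0 d1 then marginal Ps z y0 y1 d0 d1 else 0)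
        * Ps.pr {ω | pz ω = z} := by
  have stepA : Ps.pr {ω : Prim Y K | C ω.1 ω.2.1 (ω.2.2.1 z false) (ω.2.2.1 z true) ∧ ω.2.2.2 = z}
      = ∑ a : Y, ∑ b : Y, ∑ g : Fin K → Bool → Bool, ∑ z' : Fin K,
          if (C a b (g z false) (g z true) ∧ z' = z) then Ps.p (a, b, g, z') else 0 := by
    unfold Dist.pr
    refine Eq.trans (sum_prim _) ?_
    exact Finset.sum_congr rfl fun a _ => Finset.sum_congr rfl fun b _ =>
      Finset.sum_congr rfl fun g _ => Finset.sum_congr rfl fun z' _ =>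
        my_ite_congr (Classical.propDecidable _) inferInstance
          (Iff.intro (fun hh => hh) (fun hh => hh)) rfl rfl
  rw [stepA]
  have stepB : ∀ (a b : Y) (g : Fin K → Bool → Bool),
      (∑ z' : Fin K, if (C a b (g z false) (g z true) ∧ z' = z) then Ps.p (a, b, g, z') else 0)
        = if C a b (g z false) (g z true) then q Ps a b g * Ps.pr {ω | pz ω = z} else 0 := by
    intro a b g
    by_cases hc : C a b (g z false) (g z true)
    · rw [if_pos hc]
      refine Eq.trans (Finset.sum_congr rfl fun z' _ =>
        my_ite_congr inferInstance inferInstance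
          (Iff.intro (fun hh => hh.2) (fun hh => ⟨hc, hh⟩)) rfl rfl) ?_
      rw [Fintype.sum_ite_eq' z (fun z' => Ps.p (a, b, g, z'))]
      exact hp_atom Ps h a b g z
    · rw [if_neg hc]
      exact Finset.sum_eq_zero fun z' _ => if_neg fun hh => hc hh.1
  refine Eq.trans (Finset.sum_congr rfl fun a _ => Finset.sum_congr rfl fun b _ =>
    Finset.sum_congr rfl fun g _ => stepB a b g) ?_
  have stepD : ∀ (a b : Y) (g : Fin K → Bool → Bool),
      (if C a b (g z false) (g z true) then q Ps a b g * Ps.pr {ω | pz ω = z} else 0)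
        = (q Ps a b g * (if C a b (g z false) (g z true) then (1:ℝ) else 0))
          * Ps.pr {ω | pz ω = z} := by
    intro a b g
    by_cases hc : C a b (g z false) (g z true)
    · rw [if_pos hc, if_pos hc, mul_one]
    · rw [if_neg hc, if_neg hc, mul_zero, zero_mul]
  refine Eq.trans (Finset.sum_congr rfl fun a _ => Finset.sum_congr rfl fun b _ =>
    Finset.sum_congr rfl fun g _ => stepD a b g) ?_
  refine Eq.trans (Finset.sum_congr rfl fun a _ => Finset.sum_congr rfl fun b _ =>
    (Finset.sum_mul Finset.univ (fun g => q Ps a b g *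
      (if C a b (g z false) (g z true) then (1:ℝ) else 0)) (Ps.pr {ω | pz ω = z})).symm) ?_
  refine Eq.trans (Finset.sum_congr rfl fun a _ =>
    (Finset.sum_mul Finset.univ (fun b => ∑ g, q Ps a b g *
      (if C a b (g z false) (g z true) then (1:ℝ) else 0)) (Ps.pr {ω | pz ω = z})).symm) ?_
  refine Eq.trans (Finset.sum_mul Finset.univ (fun a => ∑ b, ∑ g, q Ps a b g *
      (if C a b (g z false) (g z true) then (1:ℝ) else 0)) (Ps.pr {ω | pz ω = z})).symm ?_
  refine congrArg (fun s => s * Ps.pr {ω | pz ω = z}) ?_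
  refine Eq.trans (sum_q_eq Ps z (fun y0 y1 d0 d1 => if C y0 y1 d0 d1 then (1:ℝ) else 0)) ?_
  refine Finset.sum_congr rfl fun y0 _ => Finset.sum_congr rfl fun y1 _ =>
    Finset.sum_congr rfl fun d0 _ => Finset.sum_congr rfl fun d1 _ => ?_
  by_cases hc : C y0 y1 d0 d1
  · rw [if_pos hc, if_pos hc, mul_one]
  · rw [if_neg hc, if_neg hc, mul_zero]

lemma theta_marg (Ps : Dist (Prim Y K)) (h : IVvalid Ps) :
    theta Ps = ∑ z : Fin K, Ps.pr {ω | pz ω = z}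
      * ∑ y0 : Y, ∑ y1 : Y, ∑ d0 : Bool, ∑ d1 : Bool,
          marginal Ps z y0 y1 d0 d1 * (if d1 then (y1 : ℝ) else (y0 : ℝ)) := by
  unfold theta Dist.exp
  refine Eq.trans (sum_prim (fun ω => Ps.p ω * cfY ω)) ?_
  have step1 : ∀ (a b : Y) (g : Fin K → Bool → Bool) (z' : Fin K),
      Ps.p (a, b, g, z') * cfY (a, b, g, z')
        = Ps.pr {ω | pz ω = z'} * (q Ps a b g * (if g z' true then (b : ℝ) else (a : ℝ))) := by
    intro a b g z'
    have hcf : cfY (a, b, g, z') = if g z' true then (b : ℝ) else (a : ℝ) := rfl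
    rw [hcf, hp_atom Ps h]
    ring
  refine Eq.trans (Finset.sum_congr rfl fun a _ => Finset.sum_congr rfl fun b _ =>
    Finset.sum_congr rfl fun g _ => Finset.sum_congr rfl fun z' _ => step1 a b g z') ?_
  rw [← sum_trip' (fun a b g => ∑ z' : Fin K, Ps.pr {ω | pz ω = z'}
    * (q Ps a b g * (if g z' true then (b : ℝ) else (a : ℝ))))]
  rw [Finset.sum_comm]
  refine Finset.sum_congr rfl fun z' _ => ?_
  rw [← Finset.mul_sum]
  refine congrArg (fun s => Ps.pr {ω | pz ω = z'} * s) ?_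
  exact Eq.trans (sum_trip' (fun a b g => q Ps a b g * (if g z' true then (b : ℝ) else (a : ℝ))))
    (sum_q_eq Ps z' (fun y0 y1 d0 d1 => if d1 then (y1 : ℝ) else (y0 : ℝ)))


/-- two IV-valid primitive distributions with the same marginal
distribution of `Z` and the same judge-wise marginals for
`(Y(0), Y(1), D(z,0), D(z,1))` generate the same observed data distribution and
the same average counterfactual outcome; i.e., the observed data and the average
counterfactual outcome do not depend on the joint distribution of decisions
across distinct judges. -/
theorem statement8 {Y : Finset ℝ} {K : ℕ}
    (Ps Pt : Dist (Prim Y K)) (h1 : IVvalid Ps) (h2 : IVvalid Pt)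
    (hZ : ∀ z : Fin K, Ps.pr {ω | pz ω = z} = Pt.pr {ω | pz ω = z})
    (hm : ∀ (z : Fin K) (y0 y1 : Y) (d0 d1 : Bool),
      marginal Ps z y0 y1 d0 d1 = marginal Pt z y0 y1 d0 d1) :
    (∀ (y : Y) (d : Bool) (z : Fin K),
        Ps.pr {ω | obsY ω = y ∧ obsD ω = d ∧ pz ω = z}
          = Pt.pr {ω | obsY ω = y ∧ obsD ω = d ∧ pz ω = z}) ∧
    theta Ps = theta Pt := by
  constructor
  · intro y d z
    have hset : {ω : Prim Y K | obsY ω = y ∧ obsD ω = d ∧ pz ω = z}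
        = {ω : Prim Y K | (ω.2.2.1 z false = d ∧ (if d then ω.2.1 else ω.1) = y)
            ∧ ω.2.2.2 = z} := by
      ext ω
      simp only [Set.mem_setOf_eq, obsY, obsD, pd, pz]
      constructor
      · rintro ⟨hy, hd, hz⟩
        subst hz
        subst hd
        exact ⟨⟨rfl, hy⟩, rfl⟩
      · rintro ⟨⟨hd, hy⟩, hz⟩
        subst hz
        subst hd
        exact ⟨hy, rfl, rfl⟩
    refine Eq.trans (congrArg Ps.pr hset) (Eq.trans
      (slice_marg Ps h1 z (fun y0 y1 d0 d1 => d0 = d ∧ (if d then y1 else y0) = y))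
      (Eq.trans ?_ (Eq.trans
        (slice_marg Pt h2 z (fun y0 y1 d0 d1 => d0 = d ∧ (if d then y1 else y0) = y)).symm
        (congrArg Pt.pr hset).symm)))
    rw [hZ z]
    refine congrArg (fun s => s * Pt.pr {ω | pz ω = z}) ?_
    exact Finset.sum_congr rfl fun y0 _ => Finset.sum_congr rfl fun y1 _ =>
      Finset.sum_congr rfl fun d0 _ => Finset.sum_congr rfl fun d1 _ =>
        my_ite_congr (Classical.propDecidable _) (Classical.propDecidable _)
          Iff.rfl (hm z y0 y1 d0 d1) rfl
  · rw [theta_marg Ps h1, theta_marg Pt h2]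
    refine Finset.sum_congr rfl fun z _ => ?_
    rw [hZ z]
    refine congrArg (fun s => Pt.pr {ω | pz ω = z} * s) ?_
    exact Finset.sum_congr rfl fun y0 _ => Finset.sum_congr rfl fun y1 _ =>
      Finset.sum_congr rfl fun d0 _ => Finset.sum_congr rfl fun d1 _ => by rw [hm]


end IVPol
end

section
/- Let P* be a primitive distribution with bounded outcome set 𝒴 ⊆ ℝ satisfying policy monotonicity. If P*(D(Z,1) > D(Z,0)) > 0, then E[D(Z,1)] − E[D(Z,0)] = P*(D(Z,1) > D(Z,0)) > 0 and E[Y(1) − Y(0) | D(Z,1) > D(Z,0)] = (E[Y(D(Z,1))] − E[Y(D(Z,0))]) / (E[D(Z,1)] − E[D(Z,0)]); that is, the average treatment effect for policy compliers equals the policy effect on the mean outcome divided by the policy's first-stage effect on the treatment rate. -/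
open MeasureTheory

namespace IVM

variable {K : ℕ}

/-- The outcome realized under policy `a`: `Y(D(Z, a))`. -/
noncomputable def Ya (a : Bool) (ω : PrimM K) : ℝ := if pd ω (pz ω) a then ω.2.1 else ω.1

/-- The set of policy compliers `{D(Z,1) > D(Z,0)}`. -/
def ComplSet (K : ℕ) : Set (PrimM K) := {ω | pd ω (pz ω) false < pd ω (pz ω) true}

lemma meas_pda {K : ℕ} (a : Bool) : Measurable fun ω : PrimM K => pd ω (pz ω) a := by
  exact (measurable_of_finite (fun p : (Fin K → Bool → Bool) × Fin K => p.1 p.2 a)).comp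
    (measurable_snd.comp measurable_snd)

lemma meas_pdz {K : ℕ} (z : Fin K) (a : Bool) : Measurable fun ω : PrimM K => pd ω z a := by
  exact (measurable_of_finite (fun f : Fin K → Bool → Bool => f z a)).comp
    (measurable_fst.comp (measurable_snd.comp measurable_snd))

lemma meas_M {K : ℕ} (a : Bool) : MeasurableSet {ω : PrimM K | pd ω (pz ω) a = true} :=
  (meas_pda a) (MeasurableSet.singleton true)

lemma mem_compl_iff {K : ℕ} (ω : PrimM K) :
    ω ∈ ComplSet K ↔ pd ω (pz ω) false = false ∧ pd ω (pz ω) true = true :=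
  Bool.lt_iff

lemma meas_C {K : ℕ} : MeasurableSet (ComplSet K) := by
  have : ComplSet K = {ω : PrimM K | pd ω (pz ω) true = true} \
      {ω : PrimM K | pd ω (pz ω) false = true} := by
    ext ω
    cases h0 : pd ω (pz ω) false <;> cases h1 : pd ω (pz ω) true <;>
      simp [ComplSet, Set.mem_setOf_eq, Set.mem_diff, h0, h1, Bool.lt_iff]
  rw [this]
  exact (meas_M true).diff (meas_M false)

lemma meas_Ya {K : ℕ} (a : Bool) : Measurable (Ya (K := K) a) := by
  unfold Ya
  exact Measurable.ite (meas_M a) (measurable_fst.comp measurable_snd) measurable_fst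

set_option maxHeartbeats 1000000 in
set_option synthInstance.maxHeartbeats 1000000 in
/-- under policy monotonicity, the first-stage effect of the policy
equals the mass of policy compliers, and the average treatment effect for policy
compliers equals the policy effect on the mean outcome divided by the first-stage
effect on the treatment rate. -/
theorem statement9 {K : ℕ} (𝒴 : Set ℝ) (hb : Bornology.IsBounded 𝒴)
    (μ : Measure (PrimM K)) [IsProbabilityMeasure μ]
    (hsupp : suppY 𝒴 μ) (hmono : policyMono μ)
    (hpos : 0 < μ (ComplSet K)) :
    ((μ {ω | pd ω (pz ω) true = true}).toReal
        - (μ {ω | pd ω (pz ω) false = true}).toReal = (μ (ComplSet K)).toReal ∧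
      0 < (μ (ComplSet K)).toReal) ∧
    (∫ ω in ComplSet K, (ω.2.1 - ω.1) ∂μ) / (μ (ComplSet K)).toReal
      = ((∫ ω, Ya true ω ∂μ) - ∫ ω, Ya false ω ∂μ)
          / ((μ {ω | pd ω (pz ω) true = true}).toReal
              - (μ {ω | pd ω (pz ω) false = true}).toReal) := by
  haveI hfm : IsFiniteMeasure μ := inferInstance
  have hnt : ∀ s : Set (PrimM K), μ s ≠ ⊤ := fun s => measure_ne_top μ s
  -- a.e. monotonicity at Z
  have hae : ∀ᵐ ω ∂μ, pd ω (pz ω) false ≤ pd ω (pz ω) true := by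
    have hz : ∀ z : Fin K, ∀ᵐ ω ∂μ, pd ω z false ≤ pd ω z true := by
      intro z
      have hset : {ω : PrimM K | pd ω z false ≤ pd ω z true}
          = ({ω : PrimM K | pd ω z false = true} \ {ω : PrimM K | pd ω z true = true})ᶜ := by
        ext ω
        simp only [Set.mem_compl_iff, Set.mem_diff, Set.mem_setOf_eq]
        rcases h : pd ω z false <;> rcases h' : pd ω z true <;> simp
      have hmeas : MeasurableSet {ω : PrimM K | pd ω z false ≤ pd ω z true} := by
        rw [hset]
        exact (((meas_pdz z false) (MeasurableSet.singleton true)).diff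
          ((meas_pdz z true) (MeasurableSet.singleton true))).compl
      rw [ae_iff]
      have hc : {ω : PrimM K | ¬ pd ω z false ≤ pd ω z true}
          = {ω : PrimM K | pd ω z false ≤ pd ω z true}ᶜ := rfl
      rw [hc, measure_compl hmeas (hnt _), hmono z, measure_univ]
      simp
    have hall : ∀ᵐ ω ∂μ, ∀ z : Fin K, pd ω z false ≤ pd ω z true := (ae_all_iff).mpr hz
    filter_upwards [hall] with ω h using h (pz ω)
  have hnull : μ {ω : PrimM K | ¬ pd ω (pz ω) false ≤ pd ω (pz ω) true} = 0 := ae_iff.mp hae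
  -- Part 1
  have hsub1 : {ω : PrimM K | pd ω (pz ω) true = true}
      ⊆ {ω : PrimM K | pd ω (pz ω) false = true} ∪ ComplSet K := by
    intro ω h1
    cases h : pd ω (pz ω) false with
    | false => exact Or.inr ((mem_compl_iff ω).mpr ⟨h, h1⟩)
    | true => exact Or.inl h
  have hdisj : Disjoint {ω : PrimM K | pd ω (pz ω) false = true} (ComplSet K) := by
    rw [Set.disjoint_left]
    intro ω h0 hc
    rw [mem_compl_iff] at hc
    rw [Set.mem_setOf_eq] at h0
    rw [h0] at hc
    exact absurd hc.1 (by simp)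
  have haeeq : {ω : PrimM K | pd ω (pz ω) true = true}
      =ᵐ[μ] ({ω : PrimM K | pd ω (pz ω) false = true} ∪ ComplSet K : Set (PrimM K)) := by
    rw [MeasureTheory.ae_eq_set]
    refine ⟨?_, ?_⟩
    · rw [Set.diff_eq_empty.mpr hsub1]; exact measure_empty
    · refine measure_mono_null ?_ hnull
      rintro ω ⟨hu, hn1⟩
      rw [Set.mem_setOf_eq]
      intro hle
      rcases hu with h0 | hc
      · rw [Set.mem_setOf_eq] at h0
        rw [h0] at hle
        exact hn1 (le_antisymm (Bool.le_true _) hle)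
      · exact hn1 ((mem_compl_iff ω).mp hc).2
  have hmeq : μ {ω : PrimM K | pd ω (pz ω) true = true}
      = μ {ω : PrimM K | pd ω (pz ω) false = true} + μ (ComplSet K) := by
    rw [measure_congr haeeq, measure_union hdisj meas_C]
  have h1 : (μ {ω : PrimM K | pd ω (pz ω) true = true}).toReal
      - (μ {ω : PrimM K | pd ω (pz ω) false = true}).toReal = (μ (ComplSet K)).toReal := by
    rw [hmeq, ENNReal.toReal_add (hnt _) (hnt _)]
    ring
  have hposR : 0 < (μ (ComplSet K)).toReal := ENNReal.toReal_pos hpos.ne' (hnt _)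
  refine ⟨⟨h1, hposR⟩, ?_⟩
  -- Part 2: integrability
  obtain ⟨C0, hC0⟩ := hb.exists_norm_le
  have hclos : ∀ y ∈ closure 𝒴, ‖y‖ ≤ C0 := by
    intro y hy
    have hsubB : closure 𝒴 ⊆ Metric.closedBall 0 C0 :=
      closure_minimal
        (fun x hx => by simpa [Metric.mem_closedBall, dist_zero_right] using hC0 x hx)
        Metric.isClosed_closedBall
    simpa [Metric.mem_closedBall, dist_zero_right] using hsubB hy
  have haeY : ∀ᵐ ω ∂μ, ω.1 ∈ closure 𝒴 ∧ ω.2.1 ∈ closure 𝒴 := by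
    have hmeasS' : MeasurableSet {ω : PrimM K | ω.1 ∈ closure 𝒴 ∧ ω.2.1 ∈ closure 𝒴} :=
      (measurable_fst isClosed_closure.measurableSet).inter
        ((measurable_fst.comp measurable_snd) isClosed_closure.measurableSet)
    have hone : μ {ω : PrimM K | ω.1 ∈ closure 𝒴 ∧ ω.2.1 ∈ closure 𝒴} = 1 := by
      refine le_antisymm prob_le_one ?_
      rw [← hsupp]
      exact measure_mono (fun ω hω => ⟨subset_closure hω.1, subset_closure hω.2⟩)
    rw [ae_iff]
    have hc : {ω : PrimM K | ¬ (ω.1 ∈ closure 𝒴 ∧ ω.2.1 ∈ closure 𝒴)}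
        = {ω : PrimM K | ω.1 ∈ closure 𝒴 ∧ ω.2.1 ∈ closure 𝒴}ᶜ := rfl
    rw [hc, measure_compl hmeasS' (hnt _), hone, measure_univ]
    simp
  have hbound : ∀ a : Bool, ∀ᵐ ω ∂μ, ‖Ya a ω‖ ≤ C0 := by
    intro a
    filter_upwards [haeY] with ω hω
    unfold Ya
    rcases pd ω (pz ω) a
    · simpa using hclos _ hω.1
    · simpa using hclos _ hω.2
  have hint : ∀ a : Bool, Integrable (Ya a) μ := fun a =>
    Integrable.mono' (integrable_const C0) (meas_Ya a).aestronglyMeasurable (hbound a)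
  have key : (∫ ω, Ya true ω ∂μ) - ∫ ω, Ya false ω ∂μ
      = ∫ ω in ComplSet K, (ω.2.1 - ω.1) ∂μ := by
    rw [← integral_sub (hint true) (hint false), ← integral_indicator meas_C]
    apply integral_congr_ae
    filter_upwards [hae] with ω hle
    by_cases hc : ω ∈ ComplSet K
    · obtain ⟨h0, h1⟩ := (mem_compl_iff ω).mp hc
      rw [Set.indicator_of_mem hc]
      simp [Ya, h0, h1]
    · rw [Set.indicator_of_notMem hc]
      rw [mem_compl_iff] at hc
      rcases h0 : pd ω (pz ω) false <;> rcases h1 : pd ω (pz ω) true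
      · simp [Ya, h0, h1]
      · exact absurd ⟨h0, h1⟩ hc
      · rw [h0, h1] at hle; exact absurd hle (by simp)
      · simp [Ya, h0, h1]
  rw [key, h1]

end IVM
end
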